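/- arXiv:1603.06232 — 11 statements merged into one kernel-verified Lean document; each statement's English description precedes it below -/
import Mathlib

section
/- Let $q$ be a prime power and $X$ a subset of the projective space $\mathbb{P}^m(\mathbb{F}_q)$. Let $a$ be the maximum of $|X \cap \Pi|$ over all hyperplanes $\Pi$ of $\mathbb{P}^m(\mathbb{F}_q)$. Then $|X| \le aq + 1$. -/
/-- The hyperplane of `ℙ^m(F_q)` determined by a nonzero linear functional `φ`:
the set of projective points whose representing line lies in the kernel of `φ`. -/
def projHyperplane {Fq : Type} [Field Fq] {n : ℕ}
    (φ : (Fin n → Fq) →ₗ[Fq] Fq) : Set (Projectivization Fq (Fin n → Fq)) :=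
  {P | P.submodule ≤ LinearMap.ker φ}

/-!
Count the pairs `(P, φ)` with `P ∈ X` and `φ` a nonzero functional vanishing on `P`. Each point
lies in the kernel of `q^m - 1` such functionals and each kernel contains at most `a` points of
`X`, so `|X| (q^m - 1) ≤ (q^(m+1) - 1) a`. A hyperplane has `(q^m - 1)/(q - 1)` points, so
`a (q - 1) ≤ q^m - 1`, and writing `q^(m+1) - 1 = q (q^m - 1) + (q - 1)` turns the first
inequality into `|X| ≤ a q + 1`.
-/

open Module
open scoped LinearAlgebra.Projectivization

namespace Projectivization

variable {K V : Type*} [Field K] [AddCommGroup V] [Module K V]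

theorem submodule_le_iff_rep_mem (P : ℙ K V) (W : Submodule K V) :
    P.submodule ≤ W ↔ P.rep ∈ W := by
  rw [submodule_eq, Submodule.span_singleton_le_iff_mem]

theorem range_map_subtype (W : Submodule K V) :
    Set.range (map W.subtype W.injective_subtype) = {P : ℙ K V | P.submodule ≤ W} := by
  ext P
  constructor
  · rintro ⟨P', rfl⟩
    induction P' using ind with
    | h w hw =>
      rw [map_mk, Set.mem_ofPred_eq, submodule_mk, Submodule.span_singleton_le_iff_mem]
      exact w.2
  · intro hP
    rw [Set.mem_ofPred_eq, submodule_le_iff_rep_mem] at hP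
    refine ⟨mk K ⟨P.rep, hP⟩ (by simpa using P.rep_nonzero), ?_⟩
    rw [map_mk]
    exact P.mk_rep

theorem natCard_setOf_submodule_le (W : Submodule K V) :
    Nat.card {P : ℙ K V | P.submodule ≤ W} = Nat.card (ℙ K W) := by
  rw [← range_map_subtype, Nat.card_range_of_injective (map_injective _ _)]

end Projectivization

section FiniteField

variable {K V : Type*} [Field K] [AddCommGroup V] [Module K V] [FiniteDimensional K V] {n : ℕ}

theorem natCard_ker_of_ne_zero (h : finrank K V = n + 1) {φ : Dual K V} (hφ : φ ≠ 0) :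
    Nat.card (LinearMap.ker φ) = Nat.card K ^ n := by
  rw [natCard_eq_pow_finrank (K := K)]
  have := Dual.finrank_ker_add_one_of_ne_zero hφ
  congr 1
  omega

theorem natCard_setOf_submodule_le_ker_mul (h : finrank K V = n + 1) {φ : Dual K V}
    (hφ : φ ≠ 0) :
    Nat.card {P : ℙ K V | P.submodule ≤ LinearMap.ker φ} * (Nat.card K - 1)
      = Nat.card K ^ n - 1 := by
  rw [Projectivization.natCard_setOf_submodule_le, ← Projectivization.card,
    natCard_ker_of_ne_zero h hφ]

variable [Finite K]

theorem natCard_dual_ne_zero_apply_eq_zero (h : finrank K V = n + 1) {v : V} (hv : v ≠ 0) :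
    Nat.card {φ : Dual K V // φ ≠ 0 ∧ φ v = 0} + 1 = Nat.card K ^ n := by
  have hev : Dual.eval K V v ≠ 0 := by rwa [ne_eq, eval_apply_eq_zero_iff]
  have hdual : finrank K (Dual K V) = n + 1 := by rw [Subspace.dual_finrank_eq, h]
  have : Finite (Dual K V) := Module.finite_of_finite K
  have hset : {φ : Dual K V | φ ≠ 0 ∧ φ v = 0}
      = (LinearMap.ker (Dual.eval K V v) : Set (Dual K V)) \ {0} := by
    ext φ
    simp [and_comm]
  rw [← natCard_ker_of_ne_zero hdual hev, ← SetLike.coe_sort_coe, Nat.card_coe_set_eq,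
    ← Set.ncard_sdiff_singleton_add_one (Submodule.zero_mem _), ← hset, ← Nat.card_coe_set_eq]
  rfl

open Finset in
theorem natCard_mul_le_of_forall_natCard_inter_le (h : finrank K V = n + 1) (X : Set (ℙ K V))
    {a : ℕ} (hX : ∀ φ : Dual K V, φ ≠ 0 →
      Nat.card ↥(X ∩ {P | P.submodule ≤ LinearMap.ker φ}) ≤ a) :
    Nat.card X * (Nat.card K ^ n - 1) ≤ (Nat.card K ^ (n + 1) - 1) * a := by
  classical
  have : Finite V := Module.finite_of_finite K
  have : Fintype (ℙ K V) := Fintype.ofFinite _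
  have : Finite (Dual K V) := Module.finite_of_finite K
  have : Fintype (Dual K V) := Fintype.ofFinite _
  have hdual : Nat.card (Dual K V) = Nat.card K ^ (n + 1) := by
    rw [natCard_eq_pow_finrank (K := K), Subspace.dual_finrank_eq, h]
  have hcard_ne_zero : #({φ | φ ≠ 0} : Finset (Dual K V)) = Nat.card K ^ (n + 1) - 1 := by
    rw [filter_ne', card_erase_of_mem (mem_univ _), card_univ, ← Nat.card_eq_fintype_card, hdual]
  rw [Nat.card_eq_card_toFinset, ← hcard_ne_zero]
  refine card_mul_le_card_mul (fun P φ => P.submodule ≤ LinearMap.ker φ) (fun P _ => ?_)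
    (fun φ hφ => ?_)
  · have hcount := natCard_dual_ne_zero_apply_eq_zero h P.rep_nonzero
    have : #(bipartiteAbove (fun P φ => P.submodule ≤ LinearMap.ker φ)
        {φ : Dual K V | φ ≠ 0} P) = Nat.card {φ : Dual K V // φ ≠ 0 ∧ φ P.rep = 0} := by
      simp only [bipartiteAbove, filter_filter, Projectivization.submodule_le_iff_rep_mem,
        LinearMap.mem_ker, Nat.card_eq_fintype_card, Fintype.card_subtype]
    omega
  · refine le_of_eq_of_le ?_ (hX φ (mem_filter.1 hφ).2)
    rw [Nat.card_coe_set_eq, Set.ncard_eq_toFinset_card']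
    congr 1
    ext P
    simp [bipartiteBelow]

theorem le_mul_add_one_of_mul_pow_sub_one_le {q n x a : ℕ} (hq : 2 ≤ q) (hn : 1 ≤ n)
    (hx : x * (q ^ n - 1) ≤ (q ^ (n + 1) - 1) * a) (ha : a * (q - 1) ≤ q ^ n - 1) :
    x ≤ a * q + 1 := by
  have hqn : q ≤ q ^ n := Nat.le_self_pow (by omega) q
  have hsplit : q ^ (n + 1) - 1 = q * (q ^ n - 1) + (q - 1) := by
    zify [Nat.one_le_pow n q (by omega), Nat.one_le_pow (n + 1) q (by omega), (by omega : 1 ≤ q)]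
    ring
  refine Nat.le_of_mul_le_mul_right ?_ (by omega : 0 < q ^ n - 1)
  calc x * (q ^ n - 1) ≤ (q * (q ^ n - 1) + (q - 1)) * a := hsplit ▸ hx
    _ = a * q * (q ^ n - 1) + a * (q - 1) := by ring
    _ ≤ (a * q + 1) * (q ^ n - 1) := by nlinarith

end FiniteField

/-- If `a` is the maximum of `|X ∩ Π|` over all hyperplanes `Π` of
`ℙ^m(F_q)`, then `|X| ≤ a q + 1`. -/
theorem statement_0 {Fq : Type} [Field Fq] [Fintype Fq] (q m : ℕ)
    (hq : q = Fintype.card Fq) (hm : 1 ≤ m)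
    (X : Set (Projectivization Fq (Fin (m+1) → Fq))) (a : ℕ)
    (ha : IsGreatest {c : ℕ | ∃ φ : (Fin (m+1) → Fq) →ₗ[Fq] Fq, φ ≠ 0 ∧
      c = Nat.card ↥(X ∩ projHyperplane φ)} a) :
    Nat.card X ≤ a * q + 1 := by
  obtain ⟨⟨φ₀, hφ₀, rfl⟩, hmax⟩ := ha
  rw [← Nat.card_eq_fintype_card] at hq
  subst hq
  have hdim : finrank Fq (Fin (m + 1) → Fq) = m + 1 := finrank_fin_fun Fq
  refine le_mul_add_one_of_mul_pow_sub_one_le Finite.one_lt_card hm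
    (natCard_mul_le_of_forall_natCard_inter_le hdim X fun φ hφ => hmax ⟨φ, hφ, rfl⟩) ?_
  calc Nat.card ↥(X ∩ projHyperplane φ₀) * (Nat.card Fq - 1)
      ≤ Nat.card (projHyperplane φ₀) * (Nat.card Fq - 1) :=
        Nat.mul_le_mul_right _ (Nat.card_mono (Set.toFinite _) Set.inter_subset_right)
    _ = Nat.card Fq ^ m - 1 := natCard_setOf_submodule_le_ker_mul hdim hφ₀
end

section
/- Let $q$ be a prime power, $m \ge 1$, $1 \le d \le q$, and let $f \in \mathbb{F}_q[x_1, \ldots, x_m]$ be a nonzero polynomial of degree $d$. Then the number of zeros of $f$ in $\mathbb{F}_q^m$ is at most $dq^{m-1}$. -/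
open Finset

namespace MvPolynomial

theorem card_zeros_mul_card_le_totalDegree_mul_card_pow {R : Type*} [CommRing R] [IsDomain R]
    [Fintype R] [DecidableEq R] {n : ℕ} {p : MvPolynomial (Fin n) R} (hp : p ≠ 0) :
    #{x : Fin n → R | eval x p = 0} * Fintype.card R ≤ p.totalDegree * Fintype.card R ^ n := by
  have hR : (0 : ℚ≥0) < Fintype.card R := by exact_mod_cast Fintype.card_pos
  have hsz := schwartz_zippel_totalDegree hp (univ : Finset R)
  rw [Fintype.piFinset_univ, card_univ, div_le_div_iff₀ (by positivity) hR] at hsz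
  exact_mod_cast hsz

end MvPolynomial

theorem Nat.le_mul_pow_sub_one_of_mul_le_mul_pow {c d q m : ℕ} (hq : 0 < q)
    (h : c * q ≤ d * q ^ m) : c ≤ d * q ^ (m - 1) := by
  rcases m with _ | m
  · simpa using (Nat.le_mul_of_pos_right c hq).trans h
  · rw [pow_succ, ← mul_assoc] at h
    exact Nat.le_of_mul_le_mul_right h hq

theorem statement_4_general {Fq : Type} [Field Fq] [Fintype Fq] (q m d : ℕ)
    (hq : q = Fintype.card Fq)
    (f : MvPolynomial (Fin m) Fq) (hf : f ≠ 0) (hdeg : f.totalDegree = d) :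
    Nat.card {x : Fin m → Fq | MvPolynomial.eval x f = 0} ≤ d * q ^ (m - 1) := by
  classical
  subst hq hdeg
  rw [Nat.card_eq_card_toFinset, Set.toFinset_ofPred]
  exact Nat.le_mul_pow_sub_one_of_mul_le_mul_pow Fintype.card_pos
    (MvPolynomial.card_zeros_mul_card_le_totalDegree_mul_card_pow hf)

/-- Ore's inequality: a nonzero polynomial `f ∈ F_q[x₁,…,x_m]` of degree
`d` with `1 ≤ d ≤ q` has at most `d·q^(m-1)` zeros in `F_q^m`. -/
theorem statement_4 {Fq : Type} [Field Fq] [Fintype Fq] (q m d : ℕ)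
    (hq : q = Fintype.card Fq) (hm : 1 ≤ m) (hd1 : 1 ≤ d) (hdq : d ≤ q)
    (f : MvPolynomial (Fin m) Fq) (hf : f ≠ 0) (hdeg : f.totalDegree = d) :
    Nat.card {x : Fin m → Fq | MvPolynomial.eval x f = 0} ≤ d * q ^ (m - 1) :=
  statement_4_general q m d hq f hf hdeg
end

section
/- Suppose $G_1, G_2, G_3$ are coprime homogeneous polynomials in $\mathbb{F}_q[x_0, \ldots, x_m]$, all of the same degree $k \ge 2$, such that for each pair $i < j$ the degree of $\gcd(G_i, G_j)$ is $k - 1$. Then $k = 2$, and there exist homogeneous linear polynomials $H_1, H_2, H_3$, no two of which differ by a constant multiple, such that $G_1 = H_1H_2$, $G_2 = H_2H_3$, and $G_3 = H_3H_1$ (up to nonzero scalar multiples). -/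
/-- `D` is a gcd of `A` and `B`: a common divisor divisible by every common divisor. -/
def IsGcdOf {Fq : Type} [Field Fq] {n : ℕ} (D A B : MvPolynomial (Fin n) Fq) : Prop :=
  D ∣ A ∧ D ∣ B ∧ ∀ E : MvPolynomial (Fin n) Fq, E ∣ A → E ∣ B → E ∣ D

/-!
The pairwise gcds `D₁₂, D₁₃, D₂₃` are pairwise coprime, because a common factor of two of them
divides all three `Gᵢ`. Hence `D₁₂ D₁₃ ∣ G₁`, and comparing total degrees gives
`2 (k - 1) ≤ k`, i.e. `k = 2`, with `G₁` a scalar multiple of `D₁₂ D₁₃`; likewise for `G₂, G₃`.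
The `Dᵢⱼ` are linear forms since a factor of a homogeneous polynomial is homogeneous: under
`P ↦ P(t • x)` a product becomes a single power of `t` only if both factors do.
Two proportional `Dᵢⱼ` would be a non-unit common factor of `G₁, G₂, G₃`.
-/

namespace Polynomial

theorem natTrailingDegree_eq_natDegree_of_mul {R : Type*} [Semiring R] [NoZeroDivisors R]
    {f g : R[X]} (hf : f ≠ 0) (hg : g ≠ 0)
    (h : (f * g).natTrailingDegree = (f * g).natDegree) :
    f.natTrailingDegree = f.natDegree := by
  rw [natTrailingDegree_mul hf hg, natDegree_mul hf hg] at h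
  have := natTrailingDegree_le_natDegree f
  have := natTrailingDegree_le_natDegree g
  omega

end Polynomial

namespace MvPolynomial

variable {σ R : Type*}

/-- `P ↦ P(t • x)`, viewed as a polynomial in `t` whose `t ^ n`-coefficient is the degree-`n`
homogeneous component of `P`. -/
noncomputable def scaleVars [CommSemiring R] :
    MvPolynomial σ R →ₐ[R] Polynomial (MvPolynomial σ R) :=
  aeval fun i => Polynomial.C (X i) * Polynomial.X

theorem scaleVars_monomial [CommSemiring R] (u : σ →₀ ℕ) (a : R) :
    scaleVars (monomial u a) = Polynomial.monomial u.degree (monomial u a) := by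
  rw [scaleVars, aeval_monomial, Polynomial.algebraMap_apply, algebraMap_eq]
  simp only [mul_pow, Finsupp.prod_mul, ← Polynomial.C_pow]
  rw [Finsupp.prod, Finsupp.prod, Finset.prod_pow_eq_pow_sum, ← Finsupp.degree_apply,
    ← map_prod, ← mul_assoc, ← Polynomial.C_mul, ← Polynomial.C_mul_X_pow_eq_monomial,
    monomial_eq, Finsupp.prod]

theorem eval_one_scaleVars [CommSemiring R] (P : MvPolynomial σ R) :
    (scaleVars P : Polynomial (MvPolynomial σ R)).eval 1 = P := by
  induction P using MvPolynomial.induction_on with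
  | C a => simp [scaleVars]
  | add p q hp hq => rw [map_add, Polynomial.eval_add, hp, hq]
  | mul_X p i hp => rw [map_mul, Polynomial.eval_mul, hp]; simp [scaleVars]

theorem scaleVars_injective [CommSemiring R] :
    Function.Injective (scaleVars : MvPolynomial σ R →ₐ[R] Polynomial (MvPolynomial σ R)) :=
  Function.LeftInverse.injective eval_one_scaleVars

section CommRing

variable [CommRing R]

theorem coeff_scaleVars (P : MvPolynomial σ R) (n : ℕ) :
    (scaleVars P).coeff n = homogeneousComponent n P := by
  induction P using MvPolynomial.induction_on' with
  | monomial u a =>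
    rw [scaleVars_monomial, Polynomial.coeff_monomial,
      homogeneousComponent_of_mem (isHomogeneous_monomial a rfl)]
    exact if_congr eq_comm rfl rfl
  | add p q hp hq => rw [map_add, Polynomial.coeff_add, hp, hq, map_add]

theorem IsHomogeneous.scaleVars_eq {P : MvPolynomial σ R} {n : ℕ} (hP : P.IsHomogeneous n) :
    scaleVars P = Polynomial.monomial n P := by
  ext1 d
  rw [coeff_scaleVars, homogeneousComponent_of_mem hP, Polynomial.coeff_monomial]
  exact if_congr eq_comm rfl rfl

theorem isHomogeneous_of_forall_homogeneousComponent_eq_zero {P : MvPolynomial σ R} {n : ℕ}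
    (h : ∀ d ≠ n, homogeneousComponent d P = 0) : P.IsHomogeneous n := by
  suffices homogeneousComponent n P = P from this ▸ homogeneousComponent_isHomogeneous n P
  ext u
  rw [coeff_homogeneousComponent]
  split_ifs with hu
  · rfl
  · simpa [coeff_homogeneousComponent] using (congrArg (coeff u) (h _ hu)).symm

theorem IsHomogeneous.of_dvd [IsDomain R] {P A : MvPolynomial σ R} {n : ℕ}
    (hP : P.IsHomogeneous n) (hP0 : P ≠ 0) (hA : A ∣ P) : A.IsHomogeneous A.totalDegree := by
  classical
  obtain ⟨B, rfl⟩ := hA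
  have hA0 : A ≠ 0 := left_ne_zero_of_mul hP0
  have hB0 : B ≠ 0 := right_ne_zero_of_mul hP0
  have hmonomial := hP.scaleVars_eq
  rw [map_mul] at hmonomial
  have hdeg := Polynomial.natTrailingDegree_eq_natDegree_of_mul
    (scaleVars_injective.ne hA0) (scaleVars_injective.ne hB0) (by
      rw [hmonomial, Polynomial.natDegree_monomial, Polynomial.natTrailingDegree_monomial hP0,
        if_neg hP0])
  have hAhom : A.IsHomogeneous (scaleVars A).natDegree := by
    refine isHomogeneous_of_forall_homogeneousComponent_eq_zero fun d hd => ?_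
    rw [← coeff_scaleVars]
    rcases hd.lt_or_gt with hlt | hgt
    · exact Polynomial.coeff_eq_zero_of_lt_natTrailingDegree (hdeg ▸ hlt)
    · exact Polynomial.coeff_eq_zero_of_natDegree_lt hgt
  rwa [hAhom.totalDegree hA0]

theorem exists_eq_smul_of_dvd_of_totalDegree_le [IsDomain R] {A G : MvPolynomial σ R}
    (hG0 : G ≠ 0) (hAG : A ∣ G) (hdeg : G.totalDegree ≤ A.totalDegree) :
    ∃ c : R, c ≠ 0 ∧ G = c • A := by
  obtain ⟨B, rfl⟩ := hAG
  rw [totalDegree_mul_of_isDomain (left_ne_zero_of_mul hG0) (right_ne_zero_of_mul hG0)] at hdeg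
  have hB : B = C (coeff 0 B) := totalDegree_eq_zero_iff_eq_C.mp (by omega)
  refine ⟨coeff 0 B, fun hc => hG0 (by rw [hB, hc, map_zero, mul_zero]), ?_⟩
  rw [smul_eq_C_mul, mul_comm, ← hB]

theorem eq_smul_mul_of_isRelPrime [IsDomain R] [UniqueFactorizationMonoid R]
    {G A B : MvPolynomial σ R} {k : ℕ}
    (hG : G.totalDegree = k) (hG0 : G ≠ 0) (hk : 2 ≤ k) (hAB : IsRelPrime A B)
    (hA : A ∣ G) (hB : B ∣ G) (hdegA : A.totalDegree = k - 1) (hdegB : B.totalDegree = k - 1) :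
    k = 2 ∧ ∃ c : R, c ≠ 0 ∧ G = c • (A * B) := by
  have hdvd : A * B ∣ G := hAB.mul_dvd hA hB
  have hdeg : (A * B).totalDegree = 2 * (k - 1) := by
    rw [totalDegree_mul_of_isDomain (ne_zero_of_dvd_ne_zero hG0 hA)
      (ne_zero_of_dvd_ne_zero hG0 hB), hdegA, hdegB, two_mul]
  have hle := totalDegree_le_of_dvd_of_isDomain hdvd hG0
  exact ⟨by omega, exists_eq_smul_of_dvd_of_totalDegree_le hG0 hdvd (by omega)⟩

end CommRing

end MvPolynomial

open MvPolynomial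

theorem statement_6_general {Fq : Type} [Field Fq] (m k : ℕ) (hk : 2 ≤ k)
    (G₁ G₂ G₃ : MvPolynomial (Fin (m+1)) Fq)
    (hg1 : G₁.IsHomogeneous k) (hg2 : G₂.IsHomogeneous k) (hg3 : G₃.IsHomogeneous k)
    (hG1 : G₁ ≠ 0) (hG2 : G₂ ≠ 0) (hG3 : G₃ ≠ 0)
    (hcop : ∀ E : MvPolynomial (Fin (m+1)) Fq, E ∣ G₁ → E ∣ G₂ → E ∣ G₃ → IsUnit E)
    (h12 : ∃ D : MvPolynomial (Fin (m+1)) Fq, IsGcdOf D G₁ G₂ ∧ D.totalDegree = k - 1)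
    (h13 : ∃ D : MvPolynomial (Fin (m+1)) Fq, IsGcdOf D G₁ G₃ ∧ D.totalDegree = k - 1)
    (h23 : ∃ D : MvPolynomial (Fin (m+1)) Fq, IsGcdOf D G₂ G₃ ∧ D.totalDegree = k - 1) :
    k = 2 ∧ ∃ H₁ H₂ H₃ : MvPolynomial (Fin (m+1)) Fq,
      H₁.IsHomogeneous 1 ∧ H₂.IsHomogeneous 1 ∧ H₃.IsHomogeneous 1 ∧
      (∀ c : Fq, H₂ ≠ c • H₁) ∧ (∀ c : Fq, H₃ ≠ c • H₁) ∧ (∀ c : Fq, H₃ ≠ c • H₂) ∧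
      ∃ c₁ c₂ c₃ : Fq, c₁ ≠ 0 ∧ c₂ ≠ 0 ∧ c₃ ≠ 0 ∧
        G₁ = c₁ • (H₁ * H₂) ∧ G₂ = c₂ • (H₂ * H₃) ∧ G₃ = c₃ • (H₃ * H₁) := by
  obtain ⟨D₁₂, ⟨hD₁₂G₁, hD₁₂G₂, -⟩, hdeg₁₂⟩ := h12
  obtain ⟨D₁₃, ⟨hD₁₃G₁, hD₁₃G₃, -⟩, hdeg₁₃⟩ := h13
  obtain ⟨D₂₃, ⟨hD₂₃G₂, hD₂₃G₃, -⟩, hdeg₂₃⟩ := h23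
  obtain ⟨rfl, c₁, hc₁, hG₁⟩ := eq_smul_mul_of_isRelPrime (hg1.totalDegree hG1) hG1 hk
    (fun E h h' => hcop E (h.trans hD₁₃G₁) (h'.trans hD₁₂G₂) (h.trans hD₁₃G₃))
    hD₁₃G₁ hD₁₂G₁ hdeg₁₃ hdeg₁₂
  obtain ⟨-, c₂, hc₂, hG₂⟩ := eq_smul_mul_of_isRelPrime (hg2.totalDegree hG2) hG2 hk
    (fun E h h' => hcop E (h.trans hD₁₂G₁) (h.trans hD₁₂G₂) (h'.trans hD₂₃G₃))
    hD₁₂G₂ hD₂₃G₂ hdeg₁₂ hdeg₂₃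
  obtain ⟨-, c₃, hc₃, hG₃⟩ := eq_smul_mul_of_isRelPrime (hg3.totalDegree hG3) hG3 hk
    (fun E h h' => hcop E (h'.trans hD₁₃G₁) (h.trans hD₂₃G₂) (h.trans hD₂₃G₃))
    hD₂₃G₃ hD₁₃G₃ hdeg₂₃ hdeg₁₃
  have hlinear : ∀ {D G : MvPolynomial (Fin (m+1)) Fq}, G.IsHomogeneous 2 → G ≠ 0 → D ∣ G →
      D.totalDegree = 2 - 1 → D.IsHomogeneous 1 :=
    fun hG hG0 hD hdeg => by simpa [hdeg] using hG.of_dvd hG0 hD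
  have hnonunit : ∀ {D : MvPolynomial (Fin (m+1)) Fq}, D.totalDegree = 2 - 1 → ¬ IsUnit D :=
    fun hdeg hunit => by simp [(isUnit_iff_totalDegree_of_isReduced.mp hunit).2] at hdeg
  refine ⟨rfl, D₁₃, D₁₂, D₂₃, hlinear hg1 hG1 hD₁₃G₁ hdeg₁₃, hlinear hg1 hG1 hD₁₂G₁ hdeg₁₂,
    hlinear hg2 hG2 hD₂₃G₂ hdeg₂₃, ?_, ?_, ?_, c₁, c₂, c₃, hc₁, hc₂, hc₃, hG₁, hG₂, hG₃⟩
  · rintro c rfl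
    exact hnonunit hdeg₁₃ (hcop D₁₃ hD₁₃G₁ ((dvd_smul_of_dvd c dvd_rfl).trans hD₁₂G₂) hD₁₃G₃)
  · rintro c rfl
    exact hnonunit hdeg₁₃ (hcop D₁₃ hD₁₃G₁ ((dvd_smul_of_dvd c dvd_rfl).trans hD₂₃G₂) hD₁₃G₃)
  · rintro c rfl
    exact hnonunit hdeg₁₂ (hcop D₁₂ hD₁₂G₁ hD₁₂G₂ ((dvd_smul_of_dvd c dvd_rfl).trans hD₂₃G₃))

/-- Lemma 3.3: if `G₁, G₂, G₃` are coprime homogeneous polynomials of the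
same degree `k ≥ 2` such that each pairwise gcd has degree `k - 1`, then `k = 2` and
`G₁ = H₁H₂`, `G₂ = H₂H₃`, `G₃ = H₃H₁` up to nonzero scalars, for linear forms
`H₁, H₂, H₃` no two of which differ by a constant multiple. -/
theorem statement_6 {Fq : Type} [Field Fq] [Fintype Fq] (m k : ℕ) (hk : 2 ≤ k)
    (G₁ G₂ G₃ : MvPolynomial (Fin (m+1)) Fq)
    (hg1 : G₁.IsHomogeneous k) (hg2 : G₂.IsHomogeneous k) (hg3 : G₃.IsHomogeneous k)
    (hG1 : G₁ ≠ 0) (hG2 : G₂ ≠ 0) (hG3 : G₃ ≠ 0)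
    (hcop : ∀ E : MvPolynomial (Fin (m+1)) Fq, E ∣ G₁ → E ∣ G₂ → E ∣ G₃ → IsUnit E)
    (h12 : ∃ D : MvPolynomial (Fin (m+1)) Fq, IsGcdOf D G₁ G₂ ∧ D.totalDegree = k - 1)
    (h13 : ∃ D : MvPolynomial (Fin (m+1)) Fq, IsGcdOf D G₁ G₃ ∧ D.totalDegree = k - 1)
    (h23 : ∃ D : MvPolynomial (Fin (m+1)) Fq, IsGcdOf D G₂ G₃ ∧ D.totalDegree = k - 1) :
    k = 2 ∧ ∃ H₁ H₂ H₃ : MvPolynomial (Fin (m+1)) Fq,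
      H₁.IsHomogeneous 1 ∧ H₂.IsHomogeneous 1 ∧ H₃.IsHomogeneous 1 ∧
      (∀ c : Fq, H₂ ≠ c • H₁) ∧ (∀ c : Fq, H₃ ≠ c • H₁) ∧ (∀ c : Fq, H₃ ≠ c • H₂) ∧
      ∃ c₁ c₂ c₃ : Fq, c₁ ≠ 0 ∧ c₂ ≠ 0 ∧ c₃ ≠ 0 ∧
        G₁ = c₁ • (H₁ * H₂) ∧ G₂ = c₂ • (H₂ * H₃) ∧ G₃ = c₃ • (H₃ * H₁) :=
  statement_6_general m k hk G₁ G₂ G₃ hg1 hg2 hg3 hG1 hG2 hG3 hcop h12 h13 h23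
end

section
/- Let $q$ be a prime power with $q \ge 4$, $m \ge 2$, and $1 < d < q - 1$. There exist three linearly independent homogeneous polynomials of degree $d$ in $\mathbb{F}_q[x_0, \ldots, x_m]$ whose number of common zeros in $\mathbb{P}^m(\mathbb{F}_q)$ is exactly $(d-1)q^{m-1} + p_{m-2} + \lfloor q^{m-3} \rfloor$, where $p_{m-2} = q^{m-2} + \cdots + q + 1$ and $\lfloor q^{m-3}\rfloor = 0$ if $m = 2$. -/
/-!
Let `G = ∏_{a ∈ A} (x₁ - a x₀)` for a set `A` of `d - 1` elements of `𝔽_q`, and multiply it by the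
three coordinates `x₀, x_{m-1}, x_m`. The common zeros are `V(G) ∪ V(x₀, x_{m-1}, x_m)`; count them
in `𝔽_q^(m+1)`, where each projective point has `q - 1` representatives. Fibring over `(v₀, v₁)`,
`V(G)` has `((q - 1)(d - 1) + 1) q^(m-1)` points and the coordinate subspace `q^(m-2)`. As `x₀ = 0`
on the latter, `G` vanishes there exactly where `x₁` does, so the intersection has `q^(m-3)` points
for `m ≥ 3` and is the origin for `m = 2`.
-/

open MvPolynomial Projectivization Finset
open scoped LinearAlgebra.Projectivization

/-- A homogeneous polynomial `F` vanishes at a projective point `P` if it vanishes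
at every representative of `P`. -/
def vanishesAt {Fq : Type} [Field Fq] {n : ℕ} (F : MvPolynomial (Fin n) Fq)
    (P : Projectivization Fq (Fin n → Fq)) : Prop :=
  ∀ v : {w : Fin n → Fq // w ≠ 0}, Projectivization.mk' Fq v = P →
    MvPolynomial.eval (v : Fin n → Fq) F = 0

theorem Projectivization.card_subtype_mk' {K V : Type*} [Field K] [AddCommGroup V] [Module K V]
    [Finite K] (p : ℙ K V → Prop) :
    Nat.card {v : {v : V // v ≠ 0} // p (mk' K v)} = Nat.card {P // p P} * (Nat.card K - 1) := by
  rw [Nat.card_congr ((nonZeroEquivProjectivizationProdUnits K V).subtypeEquiv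
      (p := fun v => p (mk' K v)) (q := fun x => p x.1) fun _ => Iff.rfl),
    Nat.card_congr Equiv.prodSubtypeFstEquivSubtypeProd, Nat.card_prod, Nat.card_units]

theorem MvPolynomial.IsHomogeneous.eval_smul {R σ : Type*} [CommRing R]
    {F : MvPolynomial σ R} {d : ℕ} (hF : F.IsHomogeneous d) (a : R) (v : σ → R) :
    eval (a • v) F = a ^ d * eval v F := by
  simp only [eval_eq, mul_sum, Pi.smul_apply, smul_eq_mul, mul_pow, prod_mul_distrib,
    prod_pow_eq_pow_sum]
  refine sum_congr rfl fun s hs => ?_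
  rw [← hF.degree_eq_sum_deg_support hs]
  ring

section vanishesAt

variable {K : Type} [Field K] {n d : ℕ}

theorem vanishesAt_mk'_iff {F : MvPolynomial (Fin n) K} (hF : F.IsHomogeneous d)
    (v : {w : Fin n → K // w ≠ 0}) :
    vanishesAt F (mk' K v) ↔ eval (v : Fin n → K) F = 0 := by
  refine ⟨fun h => h v rfl, fun h w hw => ?_⟩
  obtain ⟨a, ha⟩ := (mk_eq_mk_iff K _ _ w.2 v.2).mp hw
  rw [← ha, Units.smul_def, hF.eval_smul, h, mul_zero]

theorem card_setOf_forall_vanishesAt [Fintype K] {ι : Type*} {F : ι → MvPolynomial (Fin n) K}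
    (hF : ∀ i, (F i).IsHomogeneous d) (hd : d ≠ 0) :
    Nat.card {P : ℙ K (Fin n → K) | ∀ i, vanishesAt (F i) P} * (Fintype.card K - 1) + 1 =
      Nat.card {v : Fin n → K | ∀ i, eval v (F i) = 0} := by
  set S := {v : Fin n → K | ∀ i, eval v (F i) = 0}
  have h0 : 0 ∈ S := fun i => by
    rw [eval_zero, constantCoeff_eq, (hF i).coeff_eq_zero (by simpa using hd.symm)]
  rw [Nat.card_coe_set_eq S, ← Set.ncard_sdiff_singleton_add_one h0, ← Nat.card_coe_set_eq,
    ← Nat.card_eq_fintype_card, ← card_subtype_mk']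
  congr 1
  refine Nat.card_congr (((Equiv.subtypeEquivRight fun v =>
    forall_congr' fun i => vanishesAt_mk'_iff (hF i) v).trans
    (Equiv.subtypeSubtypeEquivSubtypeInter (· ≠ (0 : Fin n → K)) (· ∈ S))).trans
    (Equiv.subtypeEquivRight fun v => ?_))
  simp [and_comm]

end vanishesAt

theorem card_setOf_forall_mem_eq_zero {σ K : Type*} [Fintype σ] [Fintype K] [Zero K]
    (s : Finset σ) :
    Nat.card {v : σ → K | ∀ i ∈ s, v i = 0} = Fintype.card K ^ (Fintype.card σ - #s) := by
  classical
  have : {v : σ → K | ∀ i ∈ s, v i = 0} =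
      Fintype.piFinset fun i => if i ∈ s then {(0 : K)} else univ := by
    ext v
    simp only [Set.mem_ofPred_eq, Fintype.coe_piFinset, Set.mem_pi, Set.mem_univ, true_implies]
    refine forall_congr' fun i => ?_
    split_ifs <;> simp [*]
  rw [this, Nat.card_coe_set_eq, Set.ncard_coe_finset, Fintype.card_piFinset]
  simp [apply_ite Finset.card, prod_ite, filter_not, card_sdiff_of_subset]

theorem card_setOf_apply_zero_one_mem {K : Type*} [Fintype K] (n : ℕ) (S : Set (K × K)) :
    Nat.card {v : Fin (n + 2) → K | (v 0, v 1) ∈ S} = Nat.card S * Fintype.card K ^ n := by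
  let e : (K × K) × (Fin n → K) ≃ (Fin (n + 2) → K) :=
    (Equiv.prodAssoc K K _).trans
      ((Equiv.prodCongrRight fun _ => Fin.consEquiv fun _ => K).trans (Fin.consEquiv fun _ => K))
  rw [← Nat.card_congr (e.subtypeEquiv (p := fun x => x.1 ∈ S) fun _ => Iff.rfl),
    Nat.card_congr Equiv.prodSubtypeFstEquivSubtypeProd, Nat.card_prod, Nat.card_fun,
    Nat.card_eq_fintype_card (α := K), Nat.card_fin]

theorem card_setOf_exists_mem_eq_mul {K : Type*} [Field K] [Fintype K] {A : Finset K}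
    (hA : A.Nonempty) :
    Nat.card {x : K × K | ∃ a ∈ A, x.2 = a * x.1} = (Fintype.card K - 1) * #A + 1 := by
  classical
  have fiber (x : K) : Nat.card {y : K // ∃ a ∈ A, y = a * x} = if x = 0 then 1 else #A := by
    have : {y : K | ∃ a ∈ A, y = a * x} = A.image (· * x) := by
      ext y
      simp [eq_comm]
    rw [← Set.coe_ofPred, this, Nat.card_coe_set_eq, Set.ncard_coe_finset]
    split_ifs with hx
    · simp [hx, image_const hA]
    · exact card_image_of_injective _ (mul_left_injective₀ hx)
  refine (Nat.card_congr (Equiv.subtypeProdEquivSigmaSubtype fun x y => ∃ a ∈ A, y = a * x)).trans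
    ?_
  rw [Nat.card_sigma, Fintype.sum_eq_add_sum_compl 0, fiber, if_pos rfl,
    sum_congr rfl fun x hx => (fiber x).trans (if_neg (by simpa using hx)), sum_const, card_compl,
    card_singleton, smul_eq_mul, add_comm]

theorem MvPolynomial.linearIndependent_mul_X {R σ ι : Type*} [CommRing R] [IsDomain R]
    {G : MvPolynomial σ R} (hG : G ≠ 0) {l : ι → σ} (hl : Function.Injective l) :
    LinearIndependent R fun i => G * X (l i) :=
  ((linearIndependent_X (R := R) (σ := σ)).comp l hl).map' (LinearMap.mulLeft R G)
    (LinearMap.ker_eq_bot.mpr (mul_right_injective₀ hG))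

theorem MvPolynomial.setOf_forall_eval_mul_X_eq_zero {R σ ι : Type*} [CommRing R]
    [NoZeroDivisors R] (G : MvPolynomial σ R) (l : ι → σ) :
    {v : σ → R | ∀ i, eval v (G * X (l i)) = 0} = {v | eval v G = 0} ∪ {v | ∀ i, v (l i) = 0} := by
  ext v
  simp only [Set.mem_union, Set.mem_ofPred_eq, map_mul, eval_X, mul_eq_zero, forall_or_left]

section pencilProd

variable {K : Type*} [Field K] {n : ℕ}

noncomputable def pencilProd (A : Finset K) : MvPolynomial (Fin (n + 2)) K :=
  ∏ a ∈ A, (X 1 - C a * X 0)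

variable {A : Finset K}

theorem eval_pencilProd (v : Fin (n + 2) → K) :
    eval v (pencilProd A) = ∏ a ∈ A, (v 1 - a * v 0) := by
  simp [pencilProd, map_prod]

theorem eval_pencilProd_eq_zero_iff (v : Fin (n + 2) → K) :
    eval v (pencilProd A) = 0 ↔ ∃ a ∈ A, v 1 = a * v 0 := by
  simp [eval_pencilProd, prod_eq_zero_iff, sub_eq_zero]

theorem isHomogeneous_pencilProd : (pencilProd (n := n) A).IsHomogeneous #A := by
  simpa [pencilProd] using IsHomogeneous.prod A
    (fun a => (X 1 - C a * X 0 : MvPolynomial (Fin (n + 2)) K)) (fun _ => 1)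
    fun _ _ => (isHomogeneous_X _ _).sub (isHomogeneous_C_mul_X _ _)

theorem pencilProd_ne_zero : pencilProd (n := n) A ≠ 0 := by
  intro h
  simpa [eval_pencilProd] using congrArg (eval (Pi.single 1 1)) h

theorem setOf_eval_pencilProd_eq_zero_inter (hA : A.Nonempty) {s : Finset (Fin (n + 2))}
    (hs : 0 ∈ s) :
    {v | eval v (pencilProd A) = 0} ∩ {v | ∀ j ∈ s, v j = 0} =
      {v : Fin (n + 2) → K | ∀ j ∈ insert 1 s, v j = 0} := by
  ext v
  simp only [Set.mem_inter_iff, Set.mem_ofPred_eq, eval_pencilProd_eq_zero_iff, forall_mem_insert]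
  constructor
  · rintro ⟨⟨a, -, ha⟩, hv⟩
    exact ⟨by rw [ha, hv 0 hs, mul_zero], hv⟩
  · rintro ⟨h1, hv⟩
    exact ⟨⟨hA.choose, hA.choose_spec, by rw [h1, hv 0 hs, mul_zero]⟩, hv⟩

theorem card_setOf_forall_eval_pencilProd_mul_X_eq_zero [Fintype K] (hA : A.Nonempty)
    {ι : Type*} [Fintype ι] (l : ι → Fin (n + 2)) (hl : 0 ∈ Set.range l) :
    Nat.card {v | ∀ i, eval v (pencilProd A * X (l i)) = 0} +
        Fintype.card K ^ (n + 2 - #(insert 1 (univ.image l))) =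
      ((Fintype.card K - 1) * #A + 1) * Fintype.card K ^ n +
        Fintype.card K ^ (n + 2 - #(univ.image l)) := by
  have hZl : {v : Fin (n + 2) → K | ∀ i, v (l i) = 0} = {v | ∀ j ∈ univ.image l, v j = 0} := by
    simp
  have hZG : {v | eval v (pencilProd A) = 0} =
      {v : Fin (n + 2) → K | (v 0, v 1) ∈ {x : K × K | ∃ a ∈ A, x.2 = a * x.1}} := by
    ext v
    simp [eval_pencilProd_eq_zero_iff]
  have hcard (s : Finset (Fin (n + 2))) :
      Nat.card {v : Fin (n + 2) → K | ∀ j ∈ s, v j = 0} = Fintype.card K ^ (n + 2 - #s) := by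
    simpa using card_setOf_forall_mem_eq_zero (K := K) s
  rw [setOf_forall_eval_mul_X_eq_zero, ← card_setOf_exists_mem_eq_mul hA,
    ← card_setOf_apply_zero_one_mem, ← hZG, ← hcard, ← hcard,
    ← setOf_eval_pencilProd_eq_zero_inter hA (by simpa using hl), ← hZl]
  simp only [Nat.card_coe_set_eq]
  exact Set.ncard_union_add_ncard_inter _ _

end pencilProd

def coordTriple (k : ℕ) : Fin 3 → Fin (k + 3) := ![0, ⟨k + 1, by omega⟩, Fin.last _]

theorem coordTriple_injective (k : ℕ) : Function.Injective (coordTriple k) := by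
  intro i j
  fin_cases i <;> fin_cases j <;> simp [coordTriple, Fin.ext_iff]

theorem card_image_coordTriple (k : ℕ) : #(univ.image (coordTriple k)) = 3 := by
  rw [card_image_of_injective _ (coordTriple_injective k), card_univ, Fintype.card_fin]

theorem one_mem_image_coordTriple_zero : 1 ∈ univ.image (coordTriple 0) :=
  mem_image.mpr ⟨1, mem_univ _, rfl⟩

theorem one_notMem_image_coordTriple_succ (k : ℕ) : 1 ∉ univ.image (coordTriple (k + 1)) := by
  simp [coordTriple, Fin.ext_iff, Fin.forall_fin_succ]

theorem statement_8_general {Fq : Type} [Field Fq] [Fintype Fq] (q m d : ℕ)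
    (hq : q = Fintype.card Fq) (hm : 2 ≤ m) (hd1 : 1 < d)
    (hdq : d < q - 1) :
    ∃ F : Fin 3 → MvPolynomial (Fin (m+1)) Fq,
      (∀ i, (F i).IsHomogeneous d) ∧ LinearIndependent Fq F ∧
      Nat.card {P : Projectivization Fq (Fin (m+1) → Fq) | ∀ i, vanishesAt (F i) P} =
        (d - 1) * q ^ (m - 1) + (∑ i ∈ Finset.range (m - 1), q ^ i)
          + (if 3 ≤ m then q ^ (m - 3) else 0) := by
  obtain ⟨k, rfl⟩ : ∃ k, m = k + 2 := ⟨m - 2, by omega⟩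
  obtain ⟨t, rfl⟩ : ∃ t, d = t + 1 := ⟨d - 1, by omega⟩
  obtain ⟨r, rfl⟩ : ∃ r, q = r + 1 := ⟨q - 1, by omega⟩
  obtain ⟨A, -, hA⟩ := exists_subset_card_eq (s := (univ : Finset Fq)) (n := t) (by simp; omega)
  set l := coordTriple k
  have hF (i : Fin 3) : (pencilProd A * X (l i)).IsHomogeneous (t + 1) :=
    hA ▸ isHomogeneous_pencilProd.mul (isHomogeneous_X _ _)
  refine ⟨fun i => pencilProd A * X (l i), hF,
    linearIndependent_mul_X pencilProd_ne_zero (coordTriple_injective k), ?_⟩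
  have hcount := card_setOf_forall_eval_pencilProd_mul_X_eq_zero (n := k + 1)
    (card_pos.mp (by omega) : A.Nonempty) l ⟨0, rfl⟩
  rw [← card_setOf_forall_vanishesAt hF t.succ_ne_zero, ← hq, hA, Nat.add_sub_cancel,
    card_image_coordTriple] at hcount
  rcases k with _ | k
  · rw [insert_eq_of_mem one_mem_image_coordTriple_zero, card_image_coordTriple] at hcount
    norm_num at hcount ⊢
    refine Nat.eq_of_mul_eq_mul_right (show 0 < r by omega) ?_
    linear_combination hcount
  · rw [card_insert_of_notMem (one_notMem_image_coordTriple_succ k), card_image_coordTriple,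
      show k + 1 + 1 + 2 - (3 + 1) = k from rfl, show k + 1 + 1 + 2 - 3 = k + 1 from rfl] at hcount
    rw [show k + 1 + 2 - 3 = k from rfl]
    norm_num at hcount ⊢
    refine Nat.eq_of_mul_eq_mul_right (show 0 < r by omega) ?_
    linear_combination hcount - geom_sum_mul_add r (k + 2)

/-- for `q ≥ 4`, `m ≥ 2` and `1 < d < q - 1`, there exist three linearly
independent homogeneous polynomials of degree `d` in `F_q[x₀,…,x_m]` with exactly
`(d-1)q^(m-1) + p_(m-2) + ⌊q^(m-3)⌋` common zeros in `ℙ^m(F_q)`. -/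
theorem statement_8 {Fq : Type} [Field Fq] [Fintype Fq] (q m d : ℕ)
    (hq : q = Fintype.card Fq) (hq4 : 4 ≤ q) (hm : 2 ≤ m) (hd1 : 1 < d)
    (hdq : d < q - 1) :
    ∃ F : Fin 3 → MvPolynomial (Fin (m+1)) Fq,
      (∀ i, (F i).IsHomogeneous d) ∧ LinearIndependent Fq F ∧
      Nat.card {P : Projectivization Fq (Fin (m+1) → Fq) | ∀ i, vanishesAt (F i) P} =
        (d - 1) * q ^ (m - 1) + (∑ i ∈ Finset.range (m - 1), q ^ i)
          + (if 3 ≤ m then q ^ (m - 3) else 0) :=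
  statement_8_general q m d hq hm hd1 hdq
end

section
/- Let $q$ be a prime power, $m \ge 2$, $1 < \delta < q - 2$, and suppose that for every triple of linearly independent homogeneous polynomials of degree $\delta + 1$ in $\mathbb{F}_q[x_0, \ldots, x_m]$ the number of common projective zeros is at most $\delta q^{m-1} + p_{m-2} + \lfloor q^{m-3} \rfloor$. Then for any three linearly independent polynomials $f_1, f_2, f_3 \in \mathbb{F}_q[x_1, \ldots, x_m]$ of degree at most $\delta$, the number of common zeros in $\mathbb{F}_q^m$ is at most $(\delta - 1)q^{m-1} + \lfloor q^{m-3} \rfloor$. -/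
namespace MvPolynomial

open Finset

variable {R : Type*} [CommSemiring R]

theorem IsHomogeneous.eval_smul_s9 {σ : Type*} {φ : MvPolynomial σ R} {n : ℕ}
    (hφ : φ.IsHomogeneous n) (c : R) (v : σ → R) : eval (c • v) φ = c ^ n * eval v φ := by
  rw [φ.as_sum, map_sum, map_sum, mul_sum]
  refine sum_congr rfl fun d hd => ?_
  rw [eval_monomial, eval_monomial, ← hφ (mem_support_iff.mp hd)]
  simp only [Finsupp.prod, Pi.smul_apply, smul_eq_mul, mul_pow, prod_mul_distrib,
    prod_pow_eq_pow_sum, Finsupp.weight_apply, Pi.one_apply, Finsupp.sum, mul_one]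
  ring

theorem sum_homogeneousComponent_of_totalDegree_le {σ : Type*} {φ : MvPolynomial σ R} {n : ℕ}
    (h : φ.totalDegree ≤ n) : ∑ k ∈ range (n + 1), homogeneousComponent k φ = φ := by
  refine (sum_subset (range_subset_range.mpr (Nat.succ_le_succ h)) fun k _ hk => ?_).symm.trans
    (sum_homogeneousComponent φ)
  exact homogeneousComponent_eq_zero _ _ (by simpa using hk)

variable {m : ℕ}

/-- The homogenization `x₀ⁿ p(x₁/x₀, …, xₘ/x₀)` of `p` in degree `n`, with `x₀ = X 0`.
Components of `p` of degree above `n` are dropped, so it is only meaningful when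
`p.totalDegree ≤ n`. -/
noncomputable def homogenize (n : ℕ) (p : MvPolynomial (Fin m) R) :
    MvPolynomial (Fin (m + 1)) R :=
  ∑ k ∈ range (n + 1), X 0 ^ (n - k) * rename Fin.succ (homogeneousComponent k p)

theorem isHomogeneous_homogenize (n : ℕ) (p : MvPolynomial (Fin m) R) :
    (homogenize n p).IsHomogeneous n := by
  refine IsHomogeneous.sum _ _ _ fun k hk => ?_
  have hkn : n - k + k = n := Nat.sub_add_cancel (Nat.lt_succ_iff.mp (mem_range.mp hk))
  have := (isHomogeneous_X_pow (0 : Fin (m + 1)) (n - k)).mul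
    ((homogeneousComponent_isHomogeneous k p).rename_isHomogeneous (f := Fin.succ))
  rwa [hkn] at this

theorem aeval_homogenize_of_eq_one {S : Type*} [CommSemiring S] [Algebra R S] {n : ℕ}
    {p : MvPolynomial (Fin m) R} (hp : p.totalDegree ≤ n) {v : Fin (m + 1) → S} (hv : v 0 = 1) :
    aeval v (homogenize n p) = aeval (Fin.tail v) p := by
  conv_rhs => rw [← sum_homogeneousComponent_of_totalDegree_le hp]
  simp only [homogenize, map_sum, map_mul, map_pow, aeval_X, hv, one_pow, one_mul, aeval_rename]
  rfl

theorem aeval_homogenize_of_eq_zero {S : Type*} [CommSemiring S] [Algebra R S] {n : ℕ}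
    {p : MvPolynomial (Fin m) R} (hp : p.totalDegree < n) {v : Fin (m + 1) → S} (hv : v 0 = 0) :
    aeval v (homogenize n p) = 0 := by
  refine (map_sum _ _ _).trans (sum_eq_zero fun k hk => ?_)
  rcases (Nat.lt_succ_iff.mp (mem_range.mp hk)).lt_or_eq with hkn | rfl
  · rw [map_mul, map_pow, aeval_X, hv, zero_pow (Nat.sub_ne_zero_of_lt hkn), zero_mul]
  · rw [homogeneousComponent_eq_zero _ _ hp, map_zero, mul_zero, map_zero]

theorem aeval_cons_one_X_homogenize {n : ℕ} {p : MvPolynomial (Fin m) R}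
    (hp : p.totalDegree ≤ n) :
    aeval (Fin.cons 1 X) (homogenize n p) = p := by
  rw [aeval_homogenize_of_eq_one hp (Fin.cons_zero _ _), Fin.tail_cons, aeval_X_left_apply]

theorem linearIndependent_homogenize {ι : Type*} {f : ι → MvPolynomial (Fin m) R} {n : ℕ}
    (hf : LinearIndependent R f) (hdeg : ∀ i, (f i).totalDegree ≤ n) :
    LinearIndependent R fun i => homogenize n (f i) :=
  LinearIndependent.of_comp (aeval (Fin.cons 1 X)).toLinearMap <| by
    have hcomp : (aeval (Fin.cons 1 X)).toLinearMap ∘ (fun i => homogenize n (f i)) = f :=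
      _root_.funext fun i => aeval_cons_one_X_homogenize (hdeg i)
    rwa [hcomp]

end MvPolynomial

namespace Projectivization

open scoped LinearAlgebra.Projectivization

variable (K : Type*) [Field K] {m : ℕ}

def affineChart (x : Fin m → K) : ℙ K (Fin (m + 1) → K) :=
  mk K (Fin.cons 1 x) fun h => one_ne_zero (congrFun h 0)

def atInfinity : ℙ K (Fin m → K) → ℙ K (Fin (m + 1) → K) :=
  map (LinearMap.vecCons 0 LinearMap.id) fun _ _ h => (Matrix.vecCons_inj.mp h).2

theorem atInfinity_mk (y : Fin m → K) (hy : y ≠ 0) :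
    atInfinity K (mk K y hy) =
      mk K (Matrix.vecCons 0 y) fun h => hy (Matrix.cons_eq_zero_iff.mp h).2 :=
  rfl

theorem affineChart_injective : Function.Injective (affineChart K (m := m)) := by
  intro x y h
  obtain ⟨a, ha⟩ := (mk_eq_mk_iff' K _ _ _ _).mp h
  have ha1 : a = 1 := by simpa using congrFun ha 0
  funext i
  simpa [ha1] using (congrFun ha i.succ).symm

theorem atInfinity_injective : Function.Injective (atInfinity K (m := m)) :=
  map_injective (σ := RingHom.id K) _ _

theorem affineChart_ne_atInfinity (x : Fin m → K) (P : ℙ K (Fin m → K)) :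
    affineChart K x ≠ atInfinity K P := by
  induction P using ind with | h y hy =>
  rw [atInfinity_mk]
  intro h
  obtain ⟨a, ha⟩ := (mk_eq_mk_iff' K _ _ _ _).mp h
  simpa using congrFun ha 0

theorem card_add_card_le_of_mapsTo [Finite K] {A : Set (Fin m → K)}
    {Z : Set (ℙ K (Fin (m + 1) → K))} (hA : Set.MapsTo (affineChart K) A Z)
    (hZ : Set.range (atInfinity K) ⊆ Z) :
    Nat.card A + ∑ i ∈ Finset.range m, Nat.card K ^ i ≤ Nat.card Z := by
  rw [← card_of_finrank K (Fin m → K) (Module.finrank_fin_fun K), ← Nat.card_sum]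
  refine Nat.card_le_card_of_injective
    (Sum.elim (fun x => ⟨affineChart K x, hA x.2⟩)
      fun P => ⟨atInfinity K P, hZ ⟨P, rfl⟩⟩) ?_
  refine Function.Injective.sumElim ?_ ?_ fun x P h => ?_
  · exact fun x y h => Subtype.ext (affineChart_injective K (congrArg Subtype.val h))
  · exact fun P Q h => atInfinity_injective K (congrArg Subtype.val h)
  · exact affineChart_ne_atInfinity K x P (congrArg Subtype.val h)

end Projectivization

section ProjectiveZeros

open MvPolynomial Projectivization
open scoped LinearAlgebra.Projectivization

variable {K : Type} [Field K]

theorem vanishesAt_mk {n d : ℕ} {F : MvPolynomial (Fin n) K} (hF : F.IsHomogeneous d)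
    {v : Fin n → K} (hv : v ≠ 0) (h : eval v F = 0) : vanishesAt F (mk K v hv) := by
  rintro ⟨w, hw⟩ hwv
  obtain ⟨a, rfl⟩ := (mk_eq_mk_iff' K _ _ hw hv).mp hwv
  rw [hF.eval_smul_s9, h, mul_zero]

variable {m n : ℕ} {p : MvPolynomial (Fin m) K}

theorem vanishesAt_homogenize_affineChart (hp : p.totalDegree ≤ n) {x : Fin m → K}
    (hx : eval x p = 0) : vanishesAt (homogenize n p) (affineChart K x) := by
  refine vanishesAt_mk (isHomogeneous_homogenize n p) _ ?_
  rw [← aeval_eq_eval, aeval_homogenize_of_eq_one hp (Fin.cons_zero _ _), Fin.tail_cons,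
    aeval_eq_eval, hx]

theorem vanishesAt_homogenize_atInfinity (hp : p.totalDegree < n) (P : ℙ K (Fin m → K)) :
    vanishesAt (homogenize n p) (atInfinity K P) := by
  induction P using ind with | h y hy =>
  rw [atInfinity_mk]
  exact vanishesAt_mk (isHomogeneous_homogenize n p) _
    (aeval_homogenize_of_eq_zero hp (Matrix.cons_val_zero _ _))

end ProjectiveZeros

theorem statement_9_general {Fq : Type} [Field Fq] [Fintype Fq] (q m δ : ℕ)
    (hq : q = Fintype.card Fq) (hm : 2 ≤ m) (hδ1 : 1 < δ)
    (hproj : ∀ F : Fin 3 → MvPolynomial (Fin (m+1)) Fq,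
      (∀ i, (F i).IsHomogeneous (δ + 1)) → LinearIndependent Fq F →
      Nat.card {P : Projectivization Fq (Fin (m+1) → Fq) | ∀ i, vanishesAt (F i) P} ≤
        δ * q ^ (m - 1) + (∑ i ∈ Finset.range (m - 1), q ^ i)
          + (if 3 ≤ m then q ^ (m - 3) else 0)) :
    ∀ f : Fin 3 → MvPolynomial (Fin m) Fq,
      (∀ i, (f i).totalDegree ≤ δ) → LinearIndependent Fq f →
      Nat.card {x : Fin m → Fq | ∀ i, MvPolynomial.eval x (f i) = 0} ≤
        (δ - 1) * q ^ (m - 1) + (if 3 ≤ m then q ^ (m - 3) else 0) := by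
  intro f hdeg hli
  have hZ := hproj (fun i => MvPolynomial.homogenize (δ + 1) (f i))
    (fun i => MvPolynomial.isHomogeneous_homogenize _ _)
    (MvPolynomial.linearIndependent_homogenize hli fun i => (hdeg i).trans δ.le_succ)
  have hcount := Projectivization.card_add_card_le_of_mapsTo Fq
    (A := {x | ∀ i, MvPolynomial.eval x (f i) = 0})
    (Z := {P | ∀ i, vanishesAt (MvPolynomial.homogenize (δ + 1) (f i)) P})
    (fun x hx i => vanishesAt_homogenize_affineChart (Nat.le_succ_of_le (hdeg i)) (hx i))
    (by
      rintro _ ⟨P, rfl⟩ i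
      exact vanishesAt_homogenize_atInfinity (Nat.lt_succ_of_le (hdeg i)) P)
  have hsplit : ∑ i ∈ Finset.range m, q ^ i =
      ∑ i ∈ Finset.range (m - 1), q ^ i + q ^ (m - 1) := by
    rw [← Finset.sum_range_succ, Nat.sub_add_cancel (by omega)]
  rw [Nat.card_eq_fintype_card (α := Fq), ← hq, hsplit] at hcount
  obtain ⟨d, rfl⟩ : ∃ d, δ = d + 1 := ⟨δ - 1, by omega⟩
  rw [add_mul, one_mul] at hZ
  rw [Nat.add_sub_cancel]
  omega

/-- if every triple of linearly independent homogeneous polynomials of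
degree `δ+1` in `m+1` variables has at most `δq^(m-1) + p_(m-2) + ⌊q^(m-3)⌋` common
projective zeros, then any three linearly independent polynomials of degree `≤ δ` in
`m` variables have at most `(δ-1)q^(m-1) + ⌊q^(m-3)⌋` common zeros in `F_q^m`. -/
theorem statement_9 {Fq : Type} [Field Fq] [Fintype Fq] (q m δ : ℕ)
    (hq : q = Fintype.card Fq) (hm : 2 ≤ m) (hδ1 : 1 < δ) (hδq : δ < q - 2)
    (hproj : ∀ F : Fin 3 → MvPolynomial (Fin (m+1)) Fq,
      (∀ i, (F i).IsHomogeneous (δ + 1)) → LinearIndependent Fq F →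
      Nat.card {P : Projectivization Fq (Fin (m+1) → Fq) | ∀ i, vanishesAt (F i) P} ≤
        δ * q ^ (m - 1) + (∑ i ∈ Finset.range (m - 1), q ^ i)
          + (if 3 ≤ m then q ^ (m - 3) else 0)) :
    ∀ f : Fin 3 → MvPolynomial (Fin m) Fq,
      (∀ i, (f i).totalDegree ≤ δ) → LinearIndependent Fq f →
      Nat.card {x : Fin m → Fq | ∀ i, MvPolynomial.eval x (f i) = 0} ≤
        (δ - 1) * q ^ (m - 1) + (if 3 ≤ m then q ^ (m - 3) else 0) :=
  statement_9_general q m δ hq hm hδ1 hproj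
end

section
/- Let $q$ be a prime power, $m \ge 1$, $1 \le d < q$, and $k = \binom{m+d}{d}$. For $1 \le r \le k$, let $e_r^{\mathbb{A}}(d, m)$ be the maximum number of common zeros in $\mathbb{F}_q^m$ of $r$ linearly independent polynomials in $\mathbb{F}_q[x_1, \ldots, x_m]$ of degree at most $d$. Then $e_r^{\mathbb{A}}(d, m) \le dq^{m-1} - r + 1$. -/
/-!
Ore's inequality (the Schwartz–Zippel bound over the whole of `𝔽_q^m`) says a nonzero polynomial
of degree at most `d` has at most `d q^(m-1)` zeros. Given `r` independent polynomials with common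
zero set `Z`, pick `r - 1` points outside `Z`: some nonzero linear combination of the polynomials
vanishes on them as well as on `Z`, so Ore's inequality gives `|Z| + r - 1 ≤ d q^(m-1)`. There are
always enough such points, since otherwise that combination would vanish on all `q^m > d q^(m-1)`
points.
-/

open MvPolynomial Finset

namespace MvPolynomial

variable {F : Type*} [Field F]

theorem exists_ne_zero_eval_sum_smul_eq_zero {ι σ : Type*} [Fintype ι]
    (f : ι → MvPolynomial σ F) (S : Finset (σ → F)) (hS : #S < Fintype.card ι) :
    ∃ c : ι → F, c ≠ 0 ∧ ∀ x ∈ S, eval x (∑ i, c i • f i) = 0 := by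
  let L : (ι → F) →ₗ[F] (S → F) :=
    LinearMap.pi fun x => (aeval x.1).toLinearMap ∘ₗ Fintype.linearCombination F f
  have hker : LinearMap.ker L ≠ ⊥ :=
    LinearMap.ker_ne_bot_of_finrank_lt (by simpa using hS)
  obtain ⟨c, hc, hc0⟩ := (Submodule.ne_bot_iff _).mp hker
  refine ⟨c, hc0, fun x hx => ?_⟩
  simpa [L, Fintype.linearCombination_apply] using congr_fun hc ⟨x, hx⟩

theorem exists_ne_zero_totalDegree_le_zeros_superset {ι σ : Type*} [Fintype ι] {d : ℕ}
    {f : ι → MvPolynomial σ F} (hdeg : ∀ i, (f i).totalDegree ≤ d) (hf : LinearIndependent F f)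
    (S : Finset (σ → F)) (hS : #S < Fintype.card ι) :
    ∃ p : MvPolynomial σ F, p ≠ 0 ∧ p.totalDegree ≤ d ∧
      ∀ x, (x ∈ S ∨ ∀ i, eval x (f i) = 0) → eval x p = 0 := by
  obtain ⟨c, hc0, hcS⟩ := exists_ne_zero_eval_sum_smul_eq_zero f S hS
  refine ⟨∑ i, c i • f i, fun h => hc0 ?_, ?_, ?_⟩
  · ext i; exact Fintype.linearIndependent_iff.mp hf c h i
  · exact (totalDegree_finsetSum _ _).trans <| Finset.sup_le fun i _ =>
      (totalDegree_smul_le _ _).trans (hdeg i)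
  · rintro x (hx | hx)
    · exact hcS x hx
    · simp [hx]

variable [Fintype F] [DecidableEq F]

theorem card_zeros_mul_card_le_totalDegree_mul {n : ℕ} {p : MvPolynomial (Fin n) F}
    (hp : p ≠ 0) :
    #{x | eval x p = 0} * Fintype.card F ≤ p.totalDegree * Fintype.card F ^ n := by
  have h := schwartz_zippel_totalDegree hp (univ : Finset F)
  rw [Fintype.piFinset_univ, card_univ,
    div_le_div_iff₀ (by positivity) (by simp [Fintype.card_pos])] at h
  exact_mod_cast h

theorem card_commonZeros_add_mul_card_le {n d : ℕ} {ι : Type*} [Fintype ι]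
    {f : ι → MvPolynomial (Fin n) F} (hdeg : ∀ i, (f i).totalDegree ≤ d)
    (hf : LinearIndependent F f) (hι : 1 ≤ Fintype.card ι) (hd : d < Fintype.card F) :
    (#{x | ∀ i, eval x (f i) = 0} + (Fintype.card ι - 1)) * Fintype.card F ≤
      d * Fintype.card F ^ n := by
  set q := Fintype.card F
  set Z : Finset (Fin n → F) := {x | ∀ i, eval x (f i) = 0}
  obtain ⟨S, hSZ, hS⟩ := exists_subset_card_eq (min_le_right (Fintype.card ι - 1) #Zᶜ)
  obtain ⟨p, hp0, hpd, hpZ⟩ :=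
    exists_ne_zero_totalDegree_le_zeros_superset hdeg hf S (by omega)
  have hcount : #Z + #S ≤ #{x | eval x p = 0} := by
    rw [← card_union_of_disjoint (disjoint_of_subset_right hSZ disjoint_compl_right)]
    refine card_le_card fun x hx => ?_
    simp only [mem_union, Z, mem_filter_univ] at hx
    simpa using hpZ x hx.symm
  have hbound : (#Z + #S) * q ≤ d * q ^ n :=
    calc (#Z + #S) * q ≤ #{x | eval x p = 0} * q := Nat.mul_le_mul_right q hcount
      _ ≤ p.totalDegree * q ^ n := card_zeros_mul_card_le_totalDegree_mul hp0
      _ ≤ d * q ^ n := Nat.mul_le_mul_right _ hpd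
  suffices #S = Fintype.card ι - 1 by rwa [this] at hbound
  by_contra hne
  have hall : #Z + #S = q ^ n := by
    rw [show #S = #Zᶜ by omega, card_add_card_compl, Fintype.card_fun,
      Fintype.card_fin]
  have : d * q ^ n < q ^ n * q := by
    rw [mul_comm]; exact Nat.mul_lt_mul_of_pos_left hd (pow_pos Fintype.card_pos n)
  rw [hall] at hbound
  omega

end MvPolynomial

theorem statement_10_general {Fq : Type} [Field Fq] [Fintype Fq] (q m d r : ℕ)
    (hq : q = Fintype.card Fq) (hdq : d < q)
    (hr1 : 1 ≤ r)
    (f : Fin r → MvPolynomial (Fin m) Fq)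
    (hdeg : ∀ i, (f i).totalDegree ≤ d) (hlin : LinearIndependent Fq f) :
    (Nat.card {x : Fin m → Fq | ∀ i, MvPolynomial.eval x (f i) = 0} : ℤ) ≤
      (d : ℤ) * (q : ℤ) ^ (m - 1) - r + 1 := by
  classical
  subst hq
  have hmain := card_commonZeros_add_mul_card_le hdeg hlin (by simpa using hr1) hdq
  rw [Fintype.card_fin] at hmain
  have hpow : d * Fintype.card Fq ^ m ≤ d * Fintype.card Fq ^ (m - 1) * Fintype.card Fq := by
    rw [mul_assoc, ← pow_succ]
    exact Nat.mul_le_mul_left d (Nat.pow_le_pow_right Fintype.card_pos (by omega))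
  have hcancel := Nat.le_of_mul_le_mul_right (hmain.trans hpow) Fintype.card_pos
  have hcard : Nat.card {x : Fin m → Fq | ∀ i, eval x (f i) = 0} + (r - 1) ≤
      d * Fintype.card Fq ^ (m - 1) := by
    simp only [Nat.card_eq_fintype_card, Fintype.card_subtype, Set.mem_ofPred_eq]
    convert hcancel
  zify [hr1] at hcard
  linarith

/-- Lemma 4.3: for `1 ≤ d < q` and `1 ≤ r ≤ binom(m+d,d)`, any `r`
linearly independent polynomials of degree at most `d` in `F_q[x₁,…,x_m]` have at most
`dq^(m-1) - r + 1` common zeros in `F_q^m`. -/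
theorem statement_10 {Fq : Type} [Field Fq] [Fintype Fq] (q m d r : ℕ)
    (hq : q = Fintype.card Fq) (hm : 1 ≤ m) (hd1 : 1 ≤ d) (hdq : d < q)
    (hr1 : 1 ≤ r) (hrk : r ≤ Nat.choose (m + d) d)
    (f : Fin r → MvPolynomial (Fin m) Fq)
    (hdeg : ∀ i, (f i).totalDegree ≤ d) (hlin : LinearIndependent Fq f) :
    (Nat.card {x : Fin m → Fq | ∀ i, MvPolynomial.eval x (f i) = 0} : ℤ) ≤
      (d : ℤ) * (q : ℤ) ^ (m - 1) - r + 1 :=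
  statement_10_general q m d r hq hdq hr1 f hdeg hlin
end

section
/- Let $C$ be a linear $[n,k]$-code over $\mathbb{F}_q$ with $k \ge 1$, let $d_1 < d_2 < \cdots < d_k$ be its generalized Hamming weights, and let $d_1^\perp, \ldots, d_{n-k}^\perp$ be those of the dual code $C^\perp$. Then $\{d_j^\perp : 1 \le j \le n-k\} = \{1, \ldots, n\} \setminus \{n + 1 - d_i : 1 \le i \le k\}$. -/
/-- The `r`-th generalized Hamming weight of a linear code `C ⊆ Fq^ι`: the minimum
support size of an `r`-dimensional subcode. -/
noncomputable def ghw {Fq : Type} [Field Fq] {ι : Type} (C : Submodule Fq (ι → Fq))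
    (r : ℕ) : ℕ :=
  sInf {w : ℕ | ∃ D : Submodule Fq (ι → Fq), D ≤ C ∧ Module.finrank Fq D = r ∧
    Nat.card {i : ι | ∃ c ∈ D, c i ≠ 0} = w}

/-- The dual code of `C` with respect to the standard bilinear form. -/
def dualCode {Fq : Type} [Field Fq] {ι : Type} [Fintype ι]
    (C : Submodule Fq (ι → Fq)) : Submodule Fq (ι → Fq) where
  carrier := {v | ∀ c ∈ C, ∑ i, v i * c i = 0}
  zero_mem' := by intro c hc; simp
  add_mem' := by
    intro a b ha hb c hc
    simp only [Set.mem_setOf_eq, Pi.add_apply, add_mul] at *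
    rw [Finset.sum_add_distrib, ha c hc, hb c hc, add_zero]
  smul_mem' := by
    intro r a ha c hc
    simp only [Set.mem_setOf_eq, Pi.smul_apply, smul_eq_mul, mul_assoc] at *
    rw [← Finset.mul_sum, ha c hc, mul_zero]

/-!
Let `k_m(C)` be the largest dimension of a subcode of `C` supported on `m` coordinates. It starts
at `0`, ends at `k`, and grows by at most one per step, and `d_r(C)` is the first `m` with
`r ≤ k_m(C)`; so the weights of `C` are exactly the points where `k_m(C)` jumps. Since
`(C ⊓ E_I)^⊥ = C^⊥ ⊔ E_{Iᶜ}` for the coordinate subspaces `E_I`, counting dimensions gives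
`k_{n-m}(C^⊥) = k_m(C) + n - k - m`, so `C^⊥` jumps at `x` exactly when `C` does not jump at
`n + 1 - x`.
-/

open Module Finset

lemma exists_sInf_setOf_le_eq_iff {f : ℕ → ℕ} {n : ℕ} (h0 : f 0 = 0)
    (hmono : MonotoneOn f (Set.Iic n)) (hstep : ∀ m < n, f (m + 1) ≤ f m + 1) (x : ℕ) :
    (∃ r, 1 ≤ r ∧ r ≤ f n ∧ sInf {m | r ≤ f m} = x) ↔ 1 ≤ x ∧ x ≤ n ∧ f x = f (x - 1) + 1 := by
  constructor
  · rintro ⟨r, hr, hrn, rfl⟩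
    set m₀ := sInf {m | r ≤ f m}
    have hne : n ∈ {m | r ≤ f m} := hrn
    have hmem : r ≤ f m₀ := Nat.sInf_mem ⟨n, hne⟩
    have hle : m₀ ≤ n := Nat.sInf_le hne
    have hpos : m₀ ≠ 0 := fun h => by rw [h, h0] at hmem; omega
    have hprev : ¬ r ≤ f (m₀ - 1) := Nat.notMem_of_lt_sInf (s := {m | r ≤ f m}) (by omega)
    have hsucc := hstep (m₀ - 1) (by omega)
    rw [Nat.sub_add_cancel (by omega)] at hsucc
    omega
  · rintro ⟨hx, hxn, hjump⟩
    refine ⟨f x, by omega, hmono (Set.mem_Iic.2 hxn) (Set.mem_Iic.2 le_rfl) hxn, ?_⟩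
    refine le_antisymm (Nat.sInf_le (le_refl (f x))) (le_csInf ⟨x, le_refl (f x)⟩ fun m hm => ?_)
    by_contra! hlt
    have hfm : f x ≤ f m := hm
    have := hmono (Set.mem_Iic.2 (by omega)) (Set.mem_Iic.2 (by omega)) (Nat.le_sub_one_of_lt hlt)
    omega

namespace Submodule

variable {K V : Type} [Field K] [AddCommGroup V] [Module K V]

lemma exists_le_finrank_eq {W : Submodule K V} [FiniteDimensional K W] {r : ℕ}
    (hr : r ≤ finrank K W) : ∃ D ≤ W, finrank K D = r := by
  obtain ⟨f, hf⟩ := exists_linearIndependent_of_le_finrank hr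
  refine ⟨span K (Set.range (W.subtype ∘ f)), ?_, ?_⟩
  · rw [span_le]
    rintro _ ⟨j, rfl⟩
    exact (f j).2
  · rw [finrank_span_eq_card (hf.map' W.subtype W.ker_subtype), Fintype.card_fin]

lemma finrank_inf_add_le_of_le (C : Submodule K V) {A B : Submodule K V} (hAB : A ≤ B)
    [FiniteDimensional K B] :
    finrank K ↥(C ⊓ B) + finrank K A ≤ finrank K ↥(C ⊓ A) + finrank K B := by
  have : FiniteDimensional K A := finiteDimensional_of_le hAB
  have hinf : C ⊓ B ⊓ A = C ⊓ A := by rw [inf_assoc, inf_eq_right.mpr hAB]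
  have hsup := finrank_mono (sup_le inf_le_right hAB : C ⊓ B ⊔ A ≤ B)
  have := finrank_sup_add_finrank_inf_eq (C ⊓ B) A
  rw [hinf] at this
  omega

end Submodule

namespace LinearCode

variable {K ι : Type} [Field K]

def supportedOn (K : Type) [Field K] (I : Finset ι) : Submodule K (ι → K) :=
  ⨅ i ∈ (I : Set ι)ᶜ, LinearMap.ker (LinearMap.proj i)

lemma mem_supportedOn {I : Finset ι} {v : ι → K} : v ∈ supportedOn K I ↔ ∀ i ∉ I, v i = 0 := by
  simp [supportedOn, Submodule.mem_iInf]

lemma supportedOn_mono {I J : Finset ι} (h : I ⊆ J) : supportedOn K I ≤ supportedOn K J :=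
  fun _ hv => mem_supportedOn.2 fun i hi => mem_supportedOn.1 hv i (fun hI => hi (h hI))

@[simp]
lemma supportedOn_empty : supportedOn K (∅ : Finset ι) = ⊥ := by
  ext v
  simp [mem_supportedOn, funext_iff]

@[simp]
lemma supportedOn_univ [Fintype ι] : supportedOn K (univ : Finset ι) = ⊤ := by
  ext v
  simp [mem_supportedOn]

lemma finrank_supportedOn [DecidableEq ι] (I : Finset ι) :
    finrank K (supportedOn K I) = #I := by
  rw [supportedOn, (LinearMap.iInfKerProjEquiv K (fun _ : ι => K) (I := I)
    disjoint_compl_right (by simp)).finrank_eq, finrank_fintype_fun_eq_card]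
  simp

noncomputable def support [Finite ι] (D : Submodule K (ι → K)) : Finset ι :=
  (Set.toFinite {i | ∃ c ∈ D, c i ≠ 0}).toFinset

lemma mem_support [Finite ι] {D : Submodule K (ι → K)} {i : ι} :
    i ∈ support D ↔ ∃ c ∈ D, c i ≠ 0 :=
  Set.Finite.mem_toFinset _

lemma card_support [Finite ι] (D : Submodule K (ι → K)) :
    Nat.card {i | ∃ c ∈ D, c i ≠ 0} = #(support D) := by
  rw [Nat.card_coe_set_eq, Set.ncard_eq_toFinset_card _ (Set.toFinite _), support]

lemma le_supportedOn_iff [Finite ι] {D : Submodule K (ι → K)} {I : Finset ι} :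
    D ≤ supportedOn K I ↔ support D ⊆ I := by
  simp only [SetLike.le_def, mem_supportedOn, mem_support]
  constructor
  · rintro h i ⟨c, hc, hci⟩
    by_contra hi
    exact hci (h hc i hi)
  · intro h c hc i hi
    by_contra hci
    exact hi (h ⟨c, hc, hci⟩)

variable [Fintype ι]

lemma mem_dualCode {C : Submodule K (ι → K)} {v : ι → K} :
    v ∈ dualCode C ↔ ∀ c ∈ C, v ⬝ᵥ c = 0 :=
  Iff.rfl

section DualCode

variable [DecidableEq ι]

lemma dualCode_eq_map (C : Submodule K (ι → K)) :
    dualCode C = C.dualAnnihilator.map (dotProductEquiv K ι).symm.toLinearMap := by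
  ext v
  simp [Submodule.mem_map_equiv, Submodule.mem_dualAnnihilator, mem_dualCode]

lemma finrank_dualCode_add_finrank (C : Submodule K (ι → K)) :
    finrank K (dualCode C) + finrank K C = Fintype.card ι := by
  rw [dualCode_eq_map, LinearEquiv.finrank_map_eq, add_comm,
    Subspace.finrank_add_finrank_dualAnnihilator_eq, finrank_fintype_fun_eq_card]

lemma dualCode_inf (C D : Submodule K (ι → K)) :
    dualCode (C ⊓ D) = dualCode C ⊔ dualCode D := by
  rw [dualCode_eq_map, dualCode_eq_map, dualCode_eq_map, Subspace.dualAnnihilator_inf_eq,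
    Submodule.map_sup]

lemma dualCode_supportedOn (I : Finset ι) : dualCode (supportedOn K I) = supportedOn K Iᶜ := by
  ext v
  rw [mem_dualCode, mem_supportedOn]
  constructor
  · intro hv i hi
    have hsingle : Pi.single i 1 ∈ supportedOn K I :=
      mem_supportedOn.2 fun j hj => Pi.single_eq_of_ne (by rintro rfl; simp_all) 1
    simpa using hv _ hsingle
  · intro hv c hc
    refine sum_eq_zero fun i _ => ?_
    by_cases hi : i ∈ I
    · rw [hv i (notMem_compl.2 hi), zero_mul]
    · rw [mem_supportedOn.1 hc i hi, mul_zero]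

lemma finrank_dualCode_inf_supportedOn_compl (C : Submodule K (ι → K)) (I : Finset ι) :
    finrank K ↥(dualCode C ⊓ supportedOn K Iᶜ) + finrank K C + #I =
      finrank K ↥(C ⊓ supportedOn K I) + Fintype.card ι := by
  have hsup := Submodule.finrank_sup_add_finrank_inf_eq (dualCode C) (supportedOn K Iᶜ)
  have hdualI := finrank_dualCode_add_finrank (C ⊓ supportedOn K I)
  have hdualC := finrank_dualCode_add_finrank C
  rw [dualCode_inf, dualCode_supportedOn] at hdualI
  rw [finrank_supportedOn, card_compl] at hsup
  have := card_le_univ I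
  omega

end DualCode

/-- Forney's dimension/length profile. -/
noncomputable def dimLengthProfile (C : Submodule K (ι → K)) (m : ℕ) : ℕ :=
  (univ.powersetCard m).sup fun I => finrank K ↥(C ⊓ supportedOn K I)

section DimLengthProfile

variable (C : Submodule K (ι → K))

lemma finrank_inf_supportedOn_le_dimLengthProfile (I : Finset ι) :
    finrank K ↥(C ⊓ supportedOn K I) ≤ dimLengthProfile C #I :=
  le_sup (f := fun I => finrank K ↥(C ⊓ supportedOn K I)) (mem_powersetCard_univ.2 rfl)

lemma exists_finrank_inf_supportedOn_eq_dimLengthProfile {m : ℕ} (hm : m ≤ Fintype.card ι) :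
    ∃ I : Finset ι, #I = m ∧ finrank K ↥(C ⊓ supportedOn K I) = dimLengthProfile C m := by
  obtain ⟨I, hI, hIsup⟩ := exists_mem_eq_sup (univ.powersetCard m)
    (powersetCard_nonempty.2 (by rwa [card_univ])) fun I => finrank K ↥(C ⊓ supportedOn K I)
  exact ⟨I, mem_powersetCard_univ.1 hI, hIsup.symm⟩

lemma dimLengthProfile_zero : dimLengthProfile C 0 = 0 := by
  simp [dimLengthProfile]

lemma dimLengthProfile_card : dimLengthProfile C (Fintype.card ι) = finrank K C := by
  rw [dimLengthProfile, ← card_univ, powersetCard_self, sup_singleton, supportedOn_univ,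
    inf_top_eq]

lemma dimLengthProfile_monotoneOn :
    MonotoneOn (dimLengthProfile C) (Set.Iic (Fintype.card ι)) := by
  intro m _ m' hm' hmm'
  refine Finset.sup_le fun I hI => ?_
  rw [mem_powersetCard_univ] at hI
  obtain ⟨J, hIJ, hJ⟩ := exists_superset_card_eq (hI.symm ▸ hmm') (by simpa using hm')
  calc finrank K ↥(C ⊓ supportedOn K I)
      ≤ finrank K ↥(C ⊓ supportedOn K J) :=
        Submodule.finrank_mono (inf_le_inf_left C (supportedOn_mono hIJ))
    _ ≤ dimLengthProfile C m' := hJ ▸ finrank_inf_supportedOn_le_dimLengthProfile C J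

variable [DecidableEq ι]

lemma dimLengthProfile_succ_le (m : ℕ) :
    dimLengthProfile C (m + 1) ≤ dimLengthProfile C m + 1 := by
  refine Finset.sup_le fun I hI => ?_
  rw [mem_powersetCard_univ] at hI
  obtain ⟨i, hi⟩ : I.Nonempty := card_pos.1 (by omega)
  have hcodim := C.finrank_inf_add_le_of_le (supportedOn_mono (K := K) (erase_subset i I))
  rw [finrank_supportedOn, finrank_supportedOn, card_erase_of_mem hi] at hcodim
  have := finrank_inf_supportedOn_le_dimLengthProfile C (I.erase i)
  rw [card_erase_of_mem hi, hI, Nat.add_sub_cancel] at this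
  omega

lemma dimLengthProfile_dualCode {m : ℕ} (hm : m ≤ Fintype.card ι) :
    dimLengthProfile (dualCode C) (Fintype.card ι - m) + finrank K C + m =
      dimLengthProfile C m + Fintype.card ι := by
  apply le_antisymm
  · obtain ⟨J, hJ, hJmax⟩ :=
      exists_finrank_inf_supportedOn_eq_dimLengthProfile (dualCode C) (Nat.sub_le _ m)
    have hJc : #Jᶜ = m := by rw [card_compl, hJ]; omega
    have hkey := finrank_dualCode_inf_supportedOn_compl C Jᶜ
    have hle := finrank_inf_supportedOn_le_dimLengthProfile C Jᶜ
    rw [compl_compl] at hkey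
    rw [hJc] at hle
    omega
  · obtain ⟨I, hI, hImax⟩ := exists_finrank_inf_supportedOn_eq_dimLengthProfile C hm
    have hkey := finrank_dualCode_inf_supportedOn_compl C I
    have hle := finrank_inf_supportedOn_le_dimLengthProfile (dualCode C) Iᶜ
    rw [card_compl, hI] at hle
    omega

lemma dimLengthProfile_dualCode_jump_iff {x : ℕ} (hx : 1 ≤ x) (hxn : x ≤ Fintype.card ι) :
    dimLengthProfile (dualCode C) x = dimLengthProfile (dualCode C) (x - 1) + 1 ↔
      ¬ dimLengthProfile C (Fintype.card ι + 1 - x) =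
        dimLengthProfile C (Fintype.card ι + 1 - x - 1) + 1 := by
  have hprev := dimLengthProfile_dualCode C (m := Fintype.card ι + 1 - x) (by omega)
  have hcur := dimLengthProfile_dualCode C (m := Fintype.card ι + 1 - x - 1) (by omega)
  rw [show Fintype.card ι - (Fintype.card ι + 1 - x) = x - 1 by omega] at hprev
  rw [show Fintype.card ι - (Fintype.card ι + 1 - x - 1) = x by omega] at hcur
  have hstep := dimLengthProfile_succ_le C (Fintype.card ι + 1 - x - 1)
  have hmono := dimLengthProfile_monotoneOn C (a := Fintype.card ι + 1 - x - 1)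
    (b := Fintype.card ι + 1 - x) (Set.mem_Iic.2 (by omega)) (Set.mem_Iic.2 (by omega)) (by omega)
  rw [Nat.sub_add_cancel (by omega)] at hstep
  omega

end DimLengthProfile

lemma ghw_eq_sInf (C : Submodule K (ι → K)) {r : ℕ} (hr : r ≤ finrank K C) :
    ghw C r = sInf {m | r ≤ dimLengthProfile C m} := by
  refine csInf_eq_csInf_of_forall_exists_le ?_ ?_
  · rintro _ ⟨D, hDC, rfl, rfl⟩
    refine ⟨_, ?_, le_rfl⟩
    rw [Set.mem_ofPred_eq, card_support]
    exact (Submodule.finrank_mono (le_inf hDC (le_supportedOn_iff.2 subset_rfl))).trans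
      (finrank_inf_supportedOn_le_dimLengthProfile C _)
  · intro m hm
    by_cases hmn : m ≤ Fintype.card ι
    · obtain ⟨I, rfl, hI⟩ := exists_finrank_inf_supportedOn_eq_dimLengthProfile C hmn
      have hrI : r ≤ finrank K ↥(C ⊓ supportedOn K I) := hI ▸ hm
      obtain ⟨D, hD, hDr⟩ := Submodule.exists_le_finrank_eq hrI
      exact ⟨_, ⟨D, hD.trans inf_le_left, hDr, rfl⟩,
        (card_support D).trans_le (card_le_card (le_supportedOn_iff.1 (hD.trans inf_le_right)))⟩
    · obtain ⟨D, hD, hDr⟩ := Submodule.exists_le_finrank_eq hr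
      exact ⟨_, ⟨D, hD, hDr, rfl⟩, (card_support D).trans_le ((card_le_univ _).trans (by omega))⟩

lemma exists_ghw_eq_iff [DecidableEq ι] (C : Submodule K (ι → K)) (x : ℕ) :
    (∃ r, 1 ≤ r ∧ r ≤ finrank K C ∧ ghw C r = x) ↔
      1 ≤ x ∧ x ≤ Fintype.card ι ∧ dimLengthProfile C x = dimLengthProfile C (x - 1) + 1 := by
  rw [← exists_sInf_setOf_le_eq_iff (dimLengthProfile_zero C) (dimLengthProfile_monotoneOn C)
    fun m _ => dimLengthProfile_succ_le C m, dimLengthProfile_card]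
  refine exists_congr fun r => and_congr_right fun _ => and_congr_right fun hr => ?_
  rw [ghw_eq_sInf C hr]

end LinearCode

open LinearCode

theorem statement_12_general {Fq : Type} [Field Fq] (n k : ℕ)
    (C : Submodule Fq (Fin n → Fq)) (hdim : Module.finrank Fq C = k) :
    {x : ℕ | ∃ j : ℕ, 1 ≤ j ∧ j ≤ n - k ∧ ghw (dualCode C) j = x} =
      {x : ℕ | 1 ≤ x ∧ x ≤ n} \
        {x : ℕ | ∃ i : ℕ, 1 ≤ i ∧ i ≤ k ∧ n + 1 - ghw C i = x} := by
  have hdual : finrank Fq (dualCode C) = n - k := by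
    have := finrank_dualCode_add_finrank C
    rw [Fintype.card_fin] at this
    omega
  ext x
  simp only [Set.mem_ofPred_eq, Set.mem_sdiff]
  rw [← hdual, exists_ghw_eq_iff, Fintype.card_fin]
  constructor
  · rintro ⟨hx, hxn, hjump⟩
    refine ⟨⟨hx, hxn⟩, ?_⟩
    rintro ⟨i, hi, hik, rfl⟩
    obtain ⟨hd, hdn, hjumpC⟩ := (exists_ghw_eq_iff C _).1 ⟨i, hi, hdim ▸ hik, rfl⟩
    rw [Fintype.card_fin] at hdn
    refine (dimLengthProfile_dualCode_jump_iff C hx (by simpa using hxn)).1 hjump ?_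
    rwa [Fintype.card_fin, Nat.sub_sub_self (by omega)]
  · rintro ⟨⟨hx, hxn⟩, hnot⟩
    refine ⟨hx, hxn, (dimLengthProfile_dualCode_jump_iff C hx (by simpa using hxn)).2
      fun hjump => hnot ?_⟩
    rw [Fintype.card_fin] at hjump
    obtain ⟨i, hi, hik, hghw⟩ := (exists_ghw_eq_iff C _).2 ⟨by omega, by simp; omega, hjump⟩
    exact ⟨i, hi, hdim ▸ hik, by omega⟩

/-- Wei duality: the generalized Hamming weights of the dual code are
exactly `{1,…,n} \ {n + 1 - d_i(C) : 1 ≤ i ≤ k}`. -/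
theorem statement_12 {Fq : Type} [Field Fq] [Fintype Fq] (n k : ℕ) (hk : 1 ≤ k)
    (C : Submodule Fq (Fin n → Fq)) (hdim : Module.finrank Fq C = k) :
    {x : ℕ | ∃ j : ℕ, 1 ≤ j ∧ j ≤ n - k ∧ ghw (dualCode C) j = x} =
      {x : ℕ | 1 ≤ x ∧ x ≤ n} \
        {x : ℕ | ∃ i : ℕ, 1 ≤ i ∧ i ≤ k ∧ n + 1 - ghw C i = x} :=
  statement_12_general n k C hdim
end

section
/- Let $C$ be a linear $[n,k]$-code over $\mathbb{F}_q$ of dimension $k \ge 1$. Then its generalized Hamming weights satisfy $1 \le d_1(C) < d_2(C) < \cdots < d_k(C) \le n$. -/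
open Module

variable {K ι : Type} [Field K]

def codeSupport (D : Submodule K (ι → K)) : Set ι := {i | ∃ c ∈ D, c i ≠ 0}

theorem codeSupport_mono {D E : Submodule K (ι → K)} (h : D ≤ E) :
    codeSupport D ⊆ codeSupport E :=
  fun _ ⟨c, hc, hci⟩ => ⟨c, h hc, hci⟩

theorem ghw_le_card_codeSupport {C D : Submodule K (ι → K)} {r : ℕ} (hD : D ≤ C)
    (hr : finrank K D = r) : ghw C r ≤ Nat.card (codeSupport D) :=
  Nat.sInf_le ⟨D, hD, hr, rfl⟩

theorem exists_le_finrank_eq_codeSupport_ssubset {D : Submodule K (ι → K)} {r : ℕ}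
    (hD : finrank K D = r + 1) :
    ∃ D' ≤ D, finrank K D' = r ∧ codeSupport D' ⊂ codeSupport D := by
  have : FiniteDimensional K D := Module.finite_of_finrank_eq_succ hD
  obtain ⟨c, hc, hc0⟩ := Submodule.exists_mem_ne_zero_of_ne_bot
    ((Submodule.one_le_finrank_iff (S := D)).mp (by omega))
  obtain ⟨i, hci⟩ := Function.ne_iff.mp hc0
  let f : Dual K D := (LinearMap.proj i).domRestrict D
  have hf : f ≠ 0 := fun h => hci (LinearMap.congr_fun h ⟨c, hc⟩)
  refine ⟨(LinearMap.ker f).map D.subtype, Submodule.map_subtype_le _ _, ?_, ?_, ?_⟩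
  · have := Dual.finrank_ker_add_one_of_ne_zero hf
    rw [Submodule.finrank_map_subtype_eq]
    omega
  · exact codeSupport_mono (Submodule.map_subtype_le _ _)
  · intro h
    obtain ⟨_, ⟨x, hx, rfl⟩, hxi⟩ := h ⟨c, hc, hci⟩
    exact hxi hx

theorem exists_le_finrank_eq {D : Submodule K (ι → K)} {r : ℕ} (hr : r ≤ finrank K D) :
    ∃ D' ≤ D, finrank K D' = r := by
  obtain ⟨m, hm⟩ := Nat.exists_eq_add_of_le hr
  clear hr
  induction m generalizing D with
  | zero => exact ⟨D, le_rfl, hm⟩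
  | succ m ih =>
    obtain ⟨E, hED, hE, -⟩ := exists_le_finrank_eq_codeSupport_ssubset (r := r + m) hm
    obtain ⟨D', hD'E, hD'⟩ := ih hE
    exact ⟨D', hD'E.trans hED, hD'⟩

theorem exists_le_finrank_eq_card_codeSupport_eq_ghw {C : Submodule K (ι → K)} {r : ℕ}
    (hr : r ≤ finrank K C) :
    ∃ D ≤ C, finrank K D = r ∧ Nat.card (codeSupport D) = ghw C r := by
  obtain ⟨D, hDC, hD⟩ := exists_le_finrank_eq hr
  exact Nat.sInf_mem (s := {w | ∃ D ≤ C, finrank K D = r ∧ Nat.card (codeSupport D) = w})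
    ⟨_, D, hDC, hD, rfl⟩

theorem ghw_lt_ghw_succ [Finite ι] {C : Submodule K (ι → K)} {r : ℕ}
    (hr : r + 1 ≤ finrank K C) : ghw C r < ghw C (r + 1) := by
  obtain ⟨D, hDC, hD, hDw⟩ := exists_le_finrank_eq_card_codeSupport_eq_ghw hr
  obtain ⟨D', hD'D, hD', hss⟩ := exists_le_finrank_eq_codeSupport_ssubset hD
  calc ghw C r ≤ Nat.card (codeSupport D') := ghw_le_card_codeSupport (hD'D.trans hDC) hD'
    _ < Nat.card (codeSupport D) := by
      simpa only [Nat.card_coe_set_eq] using Set.ncard_lt_ncard hss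
    _ = ghw C (r + 1) := hDw

theorem ghw_finrank_le_card [Finite ι] (C : Submodule K (ι → K)) :
    ghw C (finrank K C) ≤ Nat.card ι :=
  (ghw_le_card_codeSupport le_rfl rfl).trans (Finite.card_subtype_le _)

theorem statement_13_general {Fq : Type} [Field Fq] (n k : ℕ) (hk : 1 ≤ k)
    (C : Submodule Fq (Fin n → Fq)) (hdim : Module.finrank Fq C = k) :
    1 ≤ ghw C 1 ∧ (∀ r : ℕ, 1 ≤ r → r < k → ghw C r < ghw C (r + 1)) ∧
      ghw C k ≤ n := by
  subst hdim
  refine ⟨Nat.one_le_of_lt (ghw_lt_ghw_succ hk), fun r _ hr => ghw_lt_ghw_succ hr, ?_⟩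
  simpa using ghw_finrank_le_card C

/-- Wei monotonicity: for an `[n,k]` code `C` with `k ≥ 1`,
`1 ≤ d₁(C) < d₂(C) < ⋯ < d_k(C) ≤ n`. -/
theorem statement_13 {Fq : Type} [Field Fq] [Fintype Fq] (n k : ℕ) (hk : 1 ≤ k)
    (C : Submodule Fq (Fin n → Fq)) (hdim : Module.finrank Fq C = k) :
    1 ≤ ghw C 1 ∧ (∀ r : ℕ, 1 ≤ r → r < k → ghw C r < ghw C (r + 1)) ∧
      ghw C k ≤ n :=
  statement_13_general n k hk C hdim
end

section
/- Let $q$ be a prime power, $m \ge 1$, and $1 \le d < q - 1$. Then the minimum distance of the dual code of the projective Reed-Muller code $PRM_q(d, m)$ is exactly $d + 2$. -/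
/-- The minimum distance (minimum weight of a nonzero codeword) of a linear code. -/
noncomputable def minDist {Fq : Type} [Field Fq] {ι : Type}
    (C : Submodule Fq (ι → Fq)) : ℕ :=
  sInf {w : ℕ | ∃ v ∈ C, v ≠ (0 : ι → Fq) ∧ Nat.card {i : ι | v i ≠ 0} = w}

/-- The projective Reed–Muller code of order `d`: evaluations of homogeneous degree-`d`
polynomials at the chosen representatives `ρ P` of the points of `ℙ^m(F_q)`. -/
noncomputable def PRM {Fq : Type} [Field Fq] (m d : ℕ)
    (ρ : Projectivization Fq (Fin (m+1) → Fq) → (Fin (m+1) → Fq)) :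
    Submodule Fq (Projectivization Fq (Fin (m+1) → Fq) → Fq) :=
  Submodule.map (LinearMap.pi fun P => (MvPolynomial.aeval (ρ P)).toLinearMap)
    (MvPolynomial.homogeneousSubmodule (Fin (m+1)) Fq d)


open Finset Polynomial

theorem Lagrange.sum_nodalWeight_mul_eval_eq_zero {F ι : Type*} [Field F] [DecidableEq ι]
    {s : Finset ι} {v : ι → F} (hvs : Set.InjOn v s) {f : F[X]} (hf : f.natDegree + 1 < #s) :
    ∑ i ∈ s, nodalWeight s v i * f.eval (v i) = 0 := by
  have hdeg : f.degree < #s :=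
    degree_le_natDegree.trans_lt (by exact_mod_cast Nat.lt_of_succ_lt hf)
  have hcoeff := coeff_eq_sum hvs hdeg
  rw [coeff_eq_zero_of_natDegree_lt (by omega)] at hcoeff
  rw [hcoeff]
  refine sum_congr rfl fun i _ => ?_
  rw [nodalWeight, prod_inv_distrib, div_eq_inv_mul]

namespace MvPolynomial

variable {R σ : Type*}

theorem IsHomogeneous.eval_smul_s14 [CommSemiring R] {F : MvPolynomial σ R} {n : ℕ}
    (hF : F.IsHomogeneous n) (c : R) (x : σ → R) :
    eval (c • x) F = c ^ n * eval x F := by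
  rw [eval_eq, eval_eq, mul_sum]
  refine sum_congr rfl fun e he => ?_
  rw [hF.degree_eq_sum_deg_support he, ← prod_pow_eq_pow_sum, mul_left_comm,
    ← prod_mul_distrib]
  simp only [Pi.smul_apply, smul_eq_mul, mul_pow]

theorem natDegree_aeval_le_totalDegree [CommSemiring R] (F : MvPolynomial σ R)
    {g : σ → R[X]} (hg : ∀ i, (g i).natDegree ≤ 1) :
    (aeval g F).natDegree ≤ F.totalDegree := by
  rw [aeval_def, eval₂_eq]
  refine natDegree_sum_le_of_forall_le _ _ fun e he => ?_
  refine natDegree_C_mul_le _ _ |>.trans <| (natDegree_prod_le _ _).trans ?_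
  calc ∑ i ∈ e.support, (g i ^ e i).natDegree
      ≤ ∑ i ∈ e.support, e i := sum_le_sum fun i _ =>
        natDegree_pow_le.trans (by simpa using Nat.mul_le_mul_left (e i) (hg i))
    _ ≤ F.totalDegree := le_totalDegree he

theorem eval_aeval_C_mul_X_add_C [CommSemiring R] (F : MvPolynomial σ R) (x y : σ → R) (a : R) :
    (aeval (fun i => Polynomial.C (y i) * Polynomial.X + Polynomial.C (x i)) F).eval a =
      eval (x + a • y) F := by
  rw [aeval_def, polynomial_eval_eval₂]
  congr 1
  · ext; simp
  · ext i
    simp only [Polynomial.eval_add, Polynomial.eval_C, Polynomial.eval_mul, Polynomial.eval_X,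
      Pi.add_apply, Pi.smul_apply, smul_eq_mul, mul_comm, add_comm]

noncomputable def ofDual [CommSemiring R] [Fintype σ] [DecidableEq σ]
    (f : Module.Dual R (σ → R)) : MvPolynomial σ R :=
  ∑ i, C (f (Pi.single i 1)) * X i

theorem isHomogeneous_ofDual [CommSemiring R] [Fintype σ] [DecidableEq σ]
    (f : Module.Dual R (σ → R)) : (ofDual f).IsHomogeneous 1 :=
  IsHomogeneous.sum _ _ _ fun i _ => isHomogeneous_C_mul_X _ i

theorem eval_ofDual [CommSemiring R] [Fintype σ] [DecidableEq σ]
    (f : Module.Dual R (σ → R)) (x : σ → R) : eval x (ofDual f) = f x := by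
  conv_rhs => rw [pi_eq_sum_univ' x, map_sum]
  simp only [ofDual, map_sum, map_mul, eval_C, eval_X, map_smul, smul_eq_mul, mul_comm]

end MvPolynomial

theorem Module.exists_dual_ne_zero_eq_zero {K V : Type*} [Field K] [AddCommGroup V] [Module K V]
    {x y : V} (h : x ∉ K ∙ y) : ∃ f : Module.Dual K V, f x ≠ 0 ∧ f y = 0 := by
  obtain ⟨f, hfx, hfy⟩ := Submodule.exists_dual_map_eq_bot_of_notMem h inferInstance
  have hfy' : f y ∈ (K ∙ y).map f :=
    Submodule.mem_map_of_mem (Submodule.mem_span_singleton_self y)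
  exact ⟨f, hfx, by rwa [hfy, Submodule.mem_bot] at hfy'⟩

theorem MvPolynomial.exists_isHomogeneous_eval_ne_zero_eval_eq_zero {K σ : Type*} [Field K]
    [Fintype σ] [DecidableEq σ] {x : σ → K} (hx : x ≠ 0) {T : Finset (σ → K)}
    (hT : ∀ y ∈ T, x ∉ K ∙ y) {d : ℕ} (hd : #T ≤ d) :
    ∃ F : MvPolynomial σ K, F.IsHomogeneous d ∧ eval x F ≠ 0 ∧ ∀ y ∈ T, eval y F = 0 := by
  choose! f hfx hfy using fun y hy => Module.exists_dual_ne_zero_eq_zero (hT y hy)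
  obtain ⟨i, hi⟩ := Function.ne_iff.mp hx
  refine ⟨(∏ y ∈ T, ofDual (f y)) * X i ^ (d - #T), ?_, ?_, fun y hy => ?_⟩
  · have hprod := IsHomogeneous.prod T _ (fun _ => 1) fun y _ => isHomogeneous_ofDual (f y)
    convert hprod.mul (isHomogeneous_X_pow i (d - #T)) using 1
    simp only [sum_const, smul_eq_mul, mul_one]
    omega
  · simp only [map_mul, map_prod, map_pow, eval_ofDual, eval_X]
    exact mul_ne_zero (prod_ne_zero_iff.mpr fun y hy => hfx y hy) (pow_ne_zero _ hi)
  · rw [map_mul, map_prod, prod_eq_zero hy (by rw [eval_ofDual]; exact hfy y hy), zero_mul]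

theorem Projectivization.eq_of_mk_add_smul_eq_mk_add_smul {K V : Type*} [Field K]
    [AddCommGroup V] [Module K V] {x y : V} (hxy : LinearIndependent K ![x, y]) {a b : K}
    (ha : x + a • y ≠ 0) (hb : x + b • y ≠ 0) (hab : mk K _ ha = mk K _ hb) : a = b := by
  obtain ⟨c, hc⟩ := (mk_eq_mk_iff' K _ _ _ _).mp hab
  obtain ⟨hc1, hcb⟩ := LinearIndependent.pair_iff.mp hxy (c - 1) (c * b - a) <| by
    linear_combination (norm := module) hc
  rw [sub_eq_zero.mp hc1, one_mul, sub_eq_zero] at hcb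
  exact hcb.symm

section WeightedPoints

variable {α ι R : Type*} [DecidableEq ι] [Semiring R] {A : Finset α} {L : α → ι} {w : α → R}

theorem sum_sum_pi_single_mul [Fintype ι] (g : ι → R) :
    ∑ i, (∑ a ∈ A, Pi.single (L a) (w a) : ι → R) i * g i = ∑ a ∈ A, w a * g (L a) := by
  simp only [Finset.sum_apply, Finset.sum_mul, Pi.single_apply, ite_mul, zero_mul]
  rw [Finset.sum_comm]
  exact sum_congr rfl fun a _ => by rw [sum_ite_eq' univ (L a), if_pos (mem_univ _)]

theorem card_support_sum_pi_single (hL : Function.Injective L) (hw : ∀ a ∈ A, w a ≠ 0) :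
    Nat.card {i | (∑ a ∈ A, Pi.single (L a) (w a) : ι → R) i ≠ 0} = #A := by
  have hsupp : {i | (∑ a ∈ A, Pi.single (L a) (w a) : ι → R) i ≠ 0} = ↑(A.image L) := by
    ext i
    simp only [Set.mem_ofPred_eq, coe_image, Set.mem_image, mem_coe, Finset.sum_apply]
    constructor
    · intro h
      obtain ⟨a, ha, hne⟩ := exists_ne_zero_of_sum_ne_zero h
      refine ⟨a, ha, ?_⟩
      by_contra hai
      exact hne (Pi.single_eq_of_ne' hai _)
    · rintro ⟨a, ha, rfl⟩
      rw [sum_eq_single a (fun b _ hba => Pi.single_eq_of_ne' (hL.ne hba) _)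
        (fun h => absurd ha h), Pi.single_eq_same]
      exact hw a ha
  rw [hsupp, Nat.card_coe_set_eq, Set.ncard_coe_finset, card_image_of_injective _ hL]

end WeightedPoints

theorem minDist_eq_of_forall_le {K ι : Type} [Field K] {C : Submodule K (ι → K)} {v : ι → K}
    (hv : v ∈ C) (hv0 : v ≠ 0) {w : ℕ} (hw : Nat.card {i | v i ≠ 0} = w)
    (hmin : ∀ u ∈ C, u ≠ 0 → w ≤ Nat.card {i | u i ≠ 0}) : minDist C = w :=
  le_antisymm (Nat.sInf_le ⟨v, hv, hv0, hw⟩) <|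
    le_csInf ⟨w, v, hv, hv0, hw⟩ fun _ ⟨u, hu, hu0, hwu⟩ => hwu ▸ hmin u hu hu0

section ProjectiveReedMuller

variable {K : Type} [Field K] {m d : ℕ}
  {ρ : Projectivization K (Fin (m + 1) → K) → Fin (m + 1) → K}

theorem mem_dualCode_PRM_iff [Fintype (Projectivization K (Fin (m + 1) → K))]
    (v : Projectivization K (Fin (m + 1) → K) → K) :
    v ∈ dualCode (PRM m d ρ) ↔
      ∀ F : MvPolynomial (Fin (m + 1)) K, F.IsHomogeneous d →
        ∑ P, v P * MvPolynomial.eval (ρ P) F = 0 := by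
  simp only [dualCode, PRM, Submodule.mem_mk, AddSubmonoid.mem_mk, AddSubsemigroup.mem_mk,
    Set.mem_ofPred_eq, Submodule.mem_map, MvPolynomial.mem_homogeneousSubmodule]
  constructor
  · intro hv F hF
    exact hv _ ⟨F, hF, rfl⟩
  · rintro hv _ ⟨F, hF, rfl⟩
    exact hv F hF

variable (hρ : ∀ P : Projectivization K (Fin (m + 1) → K),
  ∃ h : ρ P ≠ 0, Projectivization.mk K (ρ P) h = P)
include hρ

theorem notMem_span_singleton_of_ne {P Q : Projectivization K (Fin (m + 1) → K)}
    (hPQ : P ≠ Q) :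
    ρ P ∉ K ∙ ρ Q := by
  obtain ⟨hP, hmkP⟩ := hρ P
  obtain ⟨hQ, hmkQ⟩ := hρ Q
  rw [Submodule.mem_span_singleton]
  rintro ⟨c, hc⟩
  exact hPQ (hmkP ▸ hmkQ ▸ (Projectivization.mk_eq_mk_iff' K _ _ hP hQ).mpr ⟨c, hc⟩)

theorem le_card_support_of_mem_dualCode_PRM [Fintype (Projectivization K (Fin (m + 1) → K))]
    {v : Projectivization K (Fin (m + 1) → K) → K} (hv : v ∈ dualCode (PRM m d ρ))
    (hv0 : v ≠ 0) :
    d + 2 ≤ Nat.card {P | v P ≠ 0} := by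
  classical
  by_contra! hcard
  set S := univ.filter fun P => v P ≠ 0
  have hS : #S ≤ d + 1 := by
    rw [← Set.ncard_coe_finset, coe_filter, ← Nat.card_coe_set_eq]
    simpa using Nat.lt_succ_iff.mp hcard
  obtain ⟨P₀, hP₀⟩ := Function.ne_iff.mp hv0
  have hP₀S : P₀ ∈ S := by simpa [S] using hP₀
  obtain ⟨F, hF, hFP₀, hFS⟩ := MvPolynomial.exists_isHomogeneous_eval_ne_zero_eval_eq_zero
    (hρ P₀).1 (T := (S.erase P₀).image ρ) (d := d)
    (by
      simp only [mem_image, mem_erase]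
      rintro _ ⟨Q, ⟨hQP₀, -⟩, rfl⟩
      exact notMem_span_singleton_of_ne hρ (Ne.symm hQP₀))
    (card_image_le.trans (by rw [card_erase_of_mem hP₀S]; omega))
  have hsum := (mem_dualCode_PRM_iff v).mp hv F hF
  rw [sum_eq_single P₀ (fun Q _ hQP₀ => ?_) (fun h => absurd (mem_univ _) h)] at hsum
  · exact mul_ne_zero hP₀ hFP₀ hsum
  by_cases hQ : v Q = 0
  · rw [hQ, zero_mul]
  · rw [hFS _ (mem_image_of_mem ρ (mem_erase.mpr ⟨hQP₀, by simpa [S] using hQ⟩)), mul_zero]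

theorem exists_mem_dualCode_PRM_card_support_eq [Fintype K]
    [Fintype (Projectivization K (Fin (m + 1) → K))] (hm : 1 ≤ m) (hq : d + 2 ≤ Fintype.card K) :
    ∃ v ∈ dualCode (PRM m d ρ), v ≠ 0 ∧ Nat.card {P | v P ≠ 0} = d + 2 := by
  classical
  set x : Fin (m + 1) → K := Pi.single 0 1
  set y : Fin (m + 1) → K := Pi.single 1 1
  have h01 : (0 : Fin (m + 1)) ≠ 1 := by simp [Fin.ext_iff]; omega
  have hxy : LinearIndependent K ![x, y] := LinearIndependent.pair_iff.mpr fun s t hst =>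
    ⟨by simpa [x, y, h01] using congrFun hst 0, by simpa [x, y, h01.symm] using congrFun hst 1⟩
  have hne (a : K) : x + a • y ≠ 0 := fun h =>
    one_ne_zero (LinearIndependent.pair_iff.mp hxy 1 a (by rwa [one_smul])).1
  set L : K → Projectivization K (Fin (m + 1) → K) := fun a => .mk K (x + a • y) (hne a)
  have hL : Function.Injective L := fun a b hab =>
    Projectivization.eq_of_mk_add_smul_eq_mk_add_smul hxy (hne a) (hne b) hab
  choose c hc using fun a => (Projectivization.mk_eq_mk_iff K _ _ _ _).mp (hρ (L a)).2
  obtain ⟨A, -, hA⟩ := exists_subset_card_eq (s := univ) (by simpa using hq)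
  have hAinj : Set.InjOn id (A : Set K) := Function.injective_id.injOn
  -- `nodalWeight A id` is the divided difference on `A`, which kills polynomials of degree
  -- `< #A - 1`; dividing by `c a ^ d` undoes the scalars of the chosen representatives.
  set w : K → K := fun a => ((c a : K) ^ d)⁻¹ * Lagrange.nodalWeight A id a
  have hw : ∀ a ∈ A, w a ≠ 0 := fun a ha =>
    mul_ne_zero (inv_ne_zero (pow_ne_zero _ (c a).ne_zero))
      (Lagrange.nodalWeight_ne_zero hAinj ha)
  have hcard := card_support_sum_pi_single hL hw
  refine ⟨∑ a ∈ A, Pi.single (L a) (w a), ?_, fun h0 => ?_, hcard.trans hA⟩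
  · refine (mem_dualCode_PRM_iff _).mpr fun F hF => ?_
    set f := MvPolynomial.aeval (fun i => Polynomial.C (y i) * Polynomial.X + Polynomial.C (x i)) F
    have hf : f.natDegree ≤ d :=
      (F.natDegree_aeval_le_totalDegree fun _ => natDegree_linear_le).trans hF.totalDegree_le
    calc ∑ P, (∑ a ∈ A, Pi.single (L a) (w a) : _ → K) P * MvPolynomial.eval (ρ P) F
        = ∑ a ∈ A, w a * MvPolynomial.eval (ρ (L a)) F := sum_sum_pi_single_mul _
      _ = ∑ a ∈ A, Lagrange.nodalWeight A id a * f.eval (id a) := sum_congr rfl fun a _ => by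
          rw [← hc a, Units.smul_def, hF.eval_smul_s14, id, MvPolynomial.eval_aeval_C_mul_X_add_C]
          simp only [w]
          field_simp
      _ = 0 := Lagrange.sum_nodalWeight_mul_eval_eq_zero hAinj (by omega)
  · rw [h0] at hcard
    simp only [Pi.zero_apply, ne_eq, not_true_eq_false, Set.ofPred_false,
      Nat.card_eq_fintype_card, Fintype.card_eq_zero] at hcard
    omega

end ProjectiveReedMuller

theorem statement_14_general {Fq : Type} [Field Fq] [Fintype Fq] (q m d : ℕ)
    [Fintype (Projectivization Fq (Fin (m+1) → Fq))]
    (hq : q = Fintype.card Fq) (hm : 1 ≤ m) (hdq : d < q - 1)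
    (ρ : Projectivization Fq (Fin (m+1) → Fq) → (Fin (m+1) → Fq))
    (hρ : ∀ P : Projectivization Fq (Fin (m+1) → Fq),
      ∃ h : ρ P ≠ 0, Projectivization.mk Fq (ρ P) h = P) :
    minDist (dualCode (PRM m d ρ)) = d + 2 := by
  have hcardFq : d + 2 ≤ Fintype.card Fq := by omega
  obtain ⟨v, hv, hv0, hcard⟩ := exists_mem_dualCode_PRM_card_support_eq hρ hm hcardFq
  exact minDist_eq_of_forall_le hv hv0 hcard fun u hu hu0 =>
    le_card_support_of_mem_dualCode_PRM hρ hu hu0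

/-- for `1 ≤ d < q - 1`, the minimum distance of the dual of the
projective Reed–Muller code `PRM_q(d,m)` is exactly `d + 2`. -/
theorem statement_14 {Fq : Type} [Field Fq] [Fintype Fq] (q m d : ℕ)
    [Fintype (Projectivization Fq (Fin (m+1) → Fq))]
    (hq : q = Fintype.card Fq) (hm : 1 ≤ m) (hd1 : 1 ≤ d) (hdq : d < q - 1)
    (ρ : Projectivization Fq (Fin (m+1) → Fq) → (Fin (m+1) → Fq))
    (hρ : ∀ P : Projectivization Fq (Fin (m+1) → Fq),
      ∃ h : ρ P ≠ 0, Projectivization.mk Fq (ρ P) h = P) :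
    minDist (dualCode (PRM m d ρ)) = d + 2 :=
  statement_14_general q m d hq hm hdq ρ hρ
end

section
/- Let $q$ be a prime power, $d \ge 1$, $m \ge 1$, and $k = \binom{m+d}{d}$. Order the $(m+1)$-tuples $(\alpha_1, \ldots, \alpha_{m+1})$ of nonnegative integers with $\alpha_1 + \cdots + \alpha_{m+1} = d$ in descending lexicographic order. Then for $s = 0, 1, \ldots, d$, the $(k-s)$-th tuple in this order is $(0, 0, \ldots, 0, s, d - s)$, and consequently the Tsfasman-Boguslavsky quantity $T_{k-s}(d,m) = p_{m-2j} + \sum_{i=j}^m \nu_i(p_{m-i} - p_{m-i-j})$ (with $(\nu_1,\ldots,\nu_{m+1})$ the $(k-s)$-th tuple and $j = \min\{i : \nu_i \ne 0\}$) equals $s$. -/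
/-- `pInt q k` is `q^k + q^(k-1) + ⋯ + q + 1` for `k ≥ 0`, and `0` for `k < 0`. -/
def pInt (q : ℕ) (k : ℤ) : ℕ :=
  if k < 0 then 0 else ∑ i ∈ Finset.range (k.toNat + 1), q ^ i

/-- `lexGt α β` : `α` is strictly greater than `β` in lexicographic order. -/
def lexGt {n : ℕ} (α β : Fin n → ℕ) : Prop :=
  ∃ i : Fin n, (∀ j : Fin n, j < i → α j = β j) ∧ β i < α i

/-!
Tuples summing to `d` that are not lexicographically above `(0, …, 0, s, d - s)` must vanish on
the first `m - 1` coordinates (at the first nonzero one they would win), hence are exactly the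
`s + 1` tuples `(0, …, 0, t, d - t)` with `t ≤ s`; the remaining ones are counted by stars and
bars. For `ν = (0, …, 0, s, d - s)` the least nonzero position is `j = m` when `s ≥ 1`, and the
Tsfasman–Boguslavsky sum collapses to `ν_m = s`; when `s = 0` it is `j = m + 1 > m` and every
term vanishes.
-/

lemma Nat.card_setOf_sum_eq (ι : Type*) [Fintype ι] (d : ℕ) :
    Nat.card {α : ι → ℕ | ∑ i, α i = d} = (Fintype.card ι + d - 1).choose d := by
  classical
  change Nat.card {P : ι → ℕ // ∑ i, P i = d} = _
  rw [← Nat.card_congr (Sym.equivNatSumOfFintype ι d), Nat.card_eq_fintype_card,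
    Sym.card_sym_eq_choose]

lemma eq_zero_of_not_lexGt {n k : ℕ} {α β : Fin n → ℕ}
    (hβ : ∀ j : Fin n, j.1 < k → β j = 0) (h : ¬ lexGt α β) (j : Fin n) (hj : j.1 < k) : α j = 0 := by
  induction j using WellFoundedLT.induction with
  | _ j ih =>
    by_contra hne
    exact h ⟨j, fun i hi => by rw [ih i hi (by omega), hβ i (by omega)], by
      rw [hβ j hj]; omega⟩

def lastTwo (n d t : ℕ) : Fin (n + 2) → ℕ :=
  fun i => if i.1 = n then t else if i.1 = n + 1 then d - t else 0

section lastTwo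

variable {n d : ℕ}

lemma lastTwo_injective : Function.Injective (lastTwo n d) := fun t t' h => by
  simpa [lastTwo] using congrFun h ⟨n, by omega⟩

lemma sum_eq_of_forall_lt_eq_zero {α : Fin (n + 2) → ℕ}
    (h : ∀ i : Fin (n + 2), i.1 < n → α i = 0) :
    ∑ i, α i = α ⟨n, by omega⟩ + α ⟨n + 1, by omega⟩ :=
  Fintype.sum_eq_add _ _ (by simp [Fin.ext_iff]) fun i hi => h i <| by
    have := i.isLt
    simp only [ne_eq, Fin.ext_iff] at hi
    omega

lemma sum_lastTwo {t : ℕ} (ht : t ≤ d) : ∑ i, lastTwo n d t i = d := by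
  rw [sum_eq_of_forall_lt_eq_zero fun i hi => by simp only [lastTwo]; split_ifs <;> omega]
  simp [lastTwo]
  omega

lemma not_lexGt_lastTwo {s t : ℕ} (ht : t ≤ s) : ¬ lexGt (lastTwo n d t) (lastTwo n d s) := by
  rintro ⟨i, hpre, hlt⟩
  have := i.isLt
  have hts := hpre ⟨n, by omega⟩
  simp only [lastTwo, Fin.lt_def] at hlt hts
  split_ifs at hlt hts <;> omega

lemma not_lexGt_lastTwo_iff {s : ℕ} {α : Fin (n + 2) → ℕ} (hα : ∑ i, α i = d) :
    ¬ lexGt α (lastTwo n d s) ↔ ∃ t ≤ s, α = lastTwo n d t := by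
  refine ⟨fun h => ?_, fun ⟨t, ht, hαt⟩ => hαt ▸ not_lexGt_lastTwo ht⟩
  have hzero := eq_zero_of_not_lexGt (k := n)
    (fun j hj => by simp only [lastTwo]; split_ifs <;> omega) h
  have hsum := (sum_eq_of_forall_lt_eq_zero hzero).symm.trans hα
  refine ⟨α ⟨n, by omega⟩, ?_, ?_⟩
  · by_contra! hs
    refine h ⟨⟨n, by omega⟩, fun j (hj : j.1 < n) => ?_, by simpa [lastTwo] using hs⟩
    rw [hzero j hj]
    simp only [lastTwo]
    split_ifs <;> omega
  · funext i
    have := i.isLt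
    by_cases hi : i.1 < n
    · rw [hzero i hi]
      simp only [lastTwo]
      split_ifs <;> omega
    · rcases (by omega : i.1 = n ∨ i.1 = n + 1) with hi | hi
      · rw [show i = ⟨n, by omega⟩ from Fin.ext hi]
        simp [lastTwo]
      · rw [show i = ⟨n + 1, by omega⟩ from Fin.ext hi]
        simp [lastTwo]
        omega

lemma card_lexGt_lastTwo {s : ℕ} (hs : s ≤ d) :
    Nat.card {α : Fin (n + 2) → ℕ | ∑ i, α i = d ∧ lexGt α (lastTwo n d s)} =
      (n + 1 + d).choose d - s - 1 := by
  classical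
  set S := {α : Fin (n + 2) → ℕ | ∑ i, α i = d}
  set C : Set (Fin (n + 2) → ℕ) := lastTwo n d '' Set.Iic s
  have hCS : C ⊆ S := by
    rintro _ ⟨t, ht, rfl⟩
    exact sum_lastTwo (le_trans ht hs)
  have hS : Nat.card S = (n + 1 + d).choose d := by
    rw [Nat.card_setOf_sum_eq, Fintype.card_fin]
    congr 1
    omega
  have hC : C.ncard = s + 1 := by
    rw [Set.ncard_image_of_injective _ lastTwo_injective, Set.ncard_Iic_nat]
  have hset : {α | ∑ i, α i = d ∧ lexGt α (lastTwo n d s)} = S \ C := by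
    ext α
    simp only [Set.mem_ofPred_eq, Set.mem_sdiff, S, C, Set.mem_image, Set.mem_Iic]
    refine and_congr_right fun hα => ?_
    rw [iff_not_comm, not_lexGt_lastTwo_iff hα]
    simp only [eq_comm]
  rw [hset, Nat.card_coe_set_eq, Set.ncard_sdiff hCS, ← Nat.card_coe_set_eq, hS, hC]
  omega

end lastTwo

lemma pInt_of_neg (q : ℕ) {k : ℤ} (hk : k < 0) : pInt q k = 0 := if_pos hk

lemma pInt_zero (q : ℕ) : pInt q 0 = 1 := by simp [pInt]

def tsfasmanBoguslavsky (q m : ℕ) (ν : ℕ → ℕ) (j : ℕ) : ℕ :=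
  pInt q ((m : ℤ) - 2 * j) +
    ∑ i ∈ Finset.Icc j m, ν i * (pInt q ((m : ℤ) - i) - pInt q ((m : ℤ) - i - j))

lemma tsfasmanBoguslavsky_of_lt (q : ℕ) {m j : ℕ} (ν : ℕ → ℕ) (hj : m < j) :
    tsfasmanBoguslavsky q m ν j = 0 := by
  rw [tsfasmanBoguslavsky, Finset.Icc_eq_empty (by omega), pInt_of_neg q (by omega)]
  rfl

lemma tsfasmanBoguslavsky_self (q : ℕ) {m : ℕ} (ν : ℕ → ℕ) (hm : 1 ≤ m) :
    tsfasmanBoguslavsky q m ν m = ν m := by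
  rw [tsfasmanBoguslavsky, Finset.Icc_self, Finset.sum_singleton, sub_self, pInt_zero,
    pInt_of_neg q (by omega), pInt_of_neg q (by omega)]
  simp

theorem statement_17_general (q m d s : ℕ) (hd : 1 ≤ d) (hm : 1 ≤ m)
    (hs : s ≤ d)
    -- `ν` as a function on 1-based positions 1, …, m+1 :
    (ν : ℕ → ℕ) (hν : ν = fun i => if i = m then s else if i = m + 1 then d - s else 0)
    -- the least index `j` with `ν j ≠ 0` :
    (j : ℕ) (hj : j = sInf {i : ℕ | ν i ≠ 0}) :
    Nat.card {α : Fin (m + 1) → ℕ | (∑ i, α i) = d ∧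
        lexGt α (fun i : Fin (m + 1) => ν (i.1 + 1))} =
      Nat.choose (m + d) d - s - 1 ∧
    pInt q ((m : ℤ) - 2 * j) +
        ∑ i ∈ Finset.Icc j m,
          ν i * (pInt q ((m : ℤ) - i) - pInt q ((m : ℤ) - i - j)) = s := by
  obtain ⟨n, rfl⟩ : ∃ n, m = n + 1 := ⟨m - 1, by omega⟩
  have hν_lastTwo : (fun i : Fin (n + 2) => ν (i.1 + 1)) = lastTwo n d s := by
    funext i
    simp only [hν, lastTwo]
    split_ifs <;> omega
  refine ⟨hν_lastTwo ▸ card_lexGt_lastTwo hs, ?_⟩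
  rcases Nat.eq_zero_or_pos s with rfl | hs_pos
  · have hj_eq : j = n + 2 := hj ▸ IsLeast.csInf_eq ⟨by simp [hν]; omega,
      fun i (hi : ν i ≠ 0) => by simp only [hν] at hi; split_ifs at hi <;> omega⟩
    exact tsfasmanBoguslavsky_of_lt q ν (by omega)
  · have hj_eq : j = n + 1 := hj ▸ IsLeast.csInf_eq ⟨by simp [hν]; omega,
      fun i (hi : ν i ≠ 0) => by simp only [hν] at hi; split_ifs at hi <;> omega⟩
    subst hj_eq
    exact (tsfasmanBoguslavsky_self q ν (by omega)).trans (by simp [hν])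

/-- among the `(m+1)`-tuples of nonnegative integers summing to `d`,
ordered in descending lexicographic order, the `(k-s)`-th tuple (for `0 ≤ s ≤ d`,
`k = binom(m+d,d)`) is `ν = (0,…,0,s,d-s)`, i.e. exactly `k - s - 1` tuples exceed it;
and the Tsfasman–Boguslavsky quantity computed from `ν` equals `s`. -/
theorem statement_17 (q m d s : ℕ) (hq : IsPrimePow q) (hd : 1 ≤ d) (hm : 1 ≤ m)
    (hs : s ≤ d)
    -- `ν` as a function on 1-based positions 1, …, m+1 :
    (ν : ℕ → ℕ) (hν : ν = fun i => if i = m then s else if i = m + 1 then d - s else 0)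
    -- the least index `j` with `ν j ≠ 0` :
    (j : ℕ) (hj : j = sInf {i : ℕ | ν i ≠ 0}) :
    Nat.card {α : Fin (m + 1) → ℕ | (∑ i, α i) = d ∧
        lexGt α (fun i : Fin (m + 1) => ν (i.1 + 1))} =
      Nat.choose (m + d) d - s - 1 ∧
    pInt q ((m : ℤ) - 2 * j) +
        ∑ i ∈ Finset.Icc j m,
          ν i * (pInt q ((m : ℤ) - i) - pInt q ((m : ℤ) - i - j)) = s :=
  statement_17_general q m d s hd hm hs ν hν j hj
end

section
/- Let $q$ be a prime power with $q \ge 4$ and $m \ge 2$, and let $1 < d < q - 1$, $k = \binom{m+d}{d}$. Let $V$ be the image of the degree-$d$ Veronese embedding of $\mathbb{P}^m(\mathbb{F}_q)$ into $\mathbb{P}^{k-1}(\mathbb{F}_q)$ (the map sending a point to the tuple of all monomials of degree $d$ in its coordinates). Then $V$ contains no projective line of $\mathbb{P}^{k-1}(\mathbb{F}_q)$: there is no line $L \subseteq \mathbb{P}^{k-1}(\mathbb{F}_q)$ with all of its $q + 1$ points lying in $V$. -/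
/-!
A homogeneous polynomial `f` of degree `d` is a linear form in the Veronese coordinates, so a
relation `a • ν(u) + b • ν(v) = c • ν(w)` between Veronese points `ν = veronese d` forces
`a f(u) + b f(v) = c f(w)`. If `v` is proportional neither to `u` nor to `w`, pick linear forms
`φ, ψ` with `φ u = 0`, `ψ w = 0`, `φ v ≠ 0 ≠ ψ v` and a coordinate with `v i ≠ 0`; for `d ≥ 2`,
`f = φ ψ X_i ^ (d - 2)` vanishes at `u` and `w` but not at `v`. So `ν(v)` is not on the line
through `ν(u)` and `ν(w)`, whereas a projective line contains three points `[x], [y], [x + y]`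
with `y` on the line through the other two.
-/

open MvPolynomial Module Submodule

variable {K σ : Type*} [Field K] [Fintype σ]

theorem LinearIndependent.notMem_span_singleton_of_pair {V : Type*} [AddCommGroup V] [Module K V]
    {x y : V} (h : LinearIndependent K ![x, y]) : y ∉ K ∙ x := fun hy => by
  obtain ⟨a, ha⟩ := mem_span_singleton.1 hy
  exact (LinearIndependent.pair_iff' (h.ne_zero 0)).1 h a ha

theorem Submodule.exists_linearIndependent_pair_of_finrank_eq_two {V : Type*} [AddCommGroup V]
    [Module K V] {W : Submodule K V} (hW : finrank K W = 2) :
    ∃ x ∈ W, ∃ y ∈ W, LinearIndependent K ![x, y] := by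
  have : Module.Finite K W := Module.finite_of_finrank_eq_succ hW
  let B := Module.finBasisOfFinrankEq K W hW
  refine ⟨B 0, (B 0).2, B 1, (B 1).2, ?_⟩
  have hB : ![(B 0 : V), B 1] = W.subtype ∘ B := by
    ext i
    fin_cases i <;> rfl
  exact hB ▸ B.linearIndependent.map' W.subtype W.ker_subtype

def veronese (d : ℕ) (v : σ → K) : {α : σ → ℕ // ∑ i, α i = d} → K :=
  fun α => ∏ i, v i ^ (α : σ → ℕ) i

theorem veronese_smul (d : ℕ) (r : K) (v : σ → K) :
    veronese d (r • v) = r ^ d • veronese d v := by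
  ext α
  simp only [veronese, Pi.smul_apply, smul_eq_mul, mul_pow, Finset.prod_mul_distrib,
    Finset.prod_pow_eq_pow_sum, α.2]

theorem span_veronese_le_of_mem_span_singleton {d : ℕ} {u v : σ → K} (h : v ∈ K ∙ u) :
    K ∙ veronese d v ≤ K ∙ veronese d u := by
  obtain ⟨r, rfl⟩ := mem_span_singleton.1 h
  rw [veronese_smul, span_singleton_le_iff_mem]
  exact smul_mem _ _ (mem_span_singleton_self _)

theorem MvPolynomial.IsHomogeneous.exists_linearMap_veronese {d : ℕ} {f : MvPolynomial σ K}
    (hf : f.IsHomogeneous d) :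
    ∃ ℓ : ({α : σ → ℕ // ∑ i, α i = d} → K) →ₗ[K] K, ∀ v, ℓ (veronese d v) = eval v f := by
  have hdeg (s : f.support) : ∑ i, (s : σ →₀ ℕ) i = d := by
    simpa [← Finsupp.degree_eq_sum, Finsupp.degree_eq_weight_one, Pi.one_def] using
      hf (mem_support_iff.1 s.2)
  refine ⟨∑ s : f.support, coeff s f • LinearMap.proj ⟨_, hdeg s⟩, fun v => ?_⟩
  simp [eval_eq', veronese, Finset.sum_attach f.support (fun s => coeff s f * ∏ i, v i ^ s i)]

theorem exists_isHomogeneous_one_eval_eq_dual [DecidableEq σ] (φ : Dual K (σ → K)) :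
    ∃ L : MvPolynomial σ K, L.IsHomogeneous 1 ∧ ∀ x : σ → K, eval x L = φ x := by
  refine ⟨∑ j, C (φ (Pi.single j 1)) * X j,
    IsHomogeneous.sum _ _ _ fun j _ => (isHomogeneous_X _ j).C_mul _, fun x => ?_⟩
  simp [φ.pi_apply_eq_sum_univ x, ← Pi.single_apply, Pi.single_comm, mul_comm]

theorem exists_isHomogeneous_eval_eq_zero_eval_ne_zero {d : ℕ} (hd : 2 ≤ d) {u v w : σ → K}
    (hvu : v ∉ K ∙ u) (hvw : v ∉ K ∙ w) :
    ∃ f : MvPolynomial σ K, f.IsHomogeneous d ∧ eval u f = 0 ∧ eval w f = 0 ∧ eval v f ≠ 0 := by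
  classical
  obtain ⟨φ, hφv, hφu⟩ := exists_dual_map_eq_bot_of_notMem hvu inferInstance
  obtain ⟨ψ, hψv, hψw⟩ := exists_dual_map_eq_bot_of_notMem hvw inferInstance
  obtain ⟨Lφ, hLφ, evalφ⟩ := exists_isHomogeneous_one_eval_eq_dual φ
  obtain ⟨Lψ, hLψ, evalψ⟩ := exists_isHomogeneous_one_eval_eq_dual ψ
  obtain ⟨i, hi⟩ : ∃ i, v i ≠ 0 := Function.ne_iff.1 fun h => hvu (h ▸ zero_mem _)
  refine ⟨Lφ * Lψ * X i ^ (d - 2), ?_, ?_, ?_, ?_⟩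
  · convert (hLφ.mul hLψ).mul ((isHomogeneous_X K i).pow (d - 2)) using 1
    omega
  · simp [evalφ, (mem_bot K).1 (hφu ▸ mem_map_of_mem (mem_span_singleton_self u))]
  · simp [evalψ, (mem_bot K).1 (hψw ▸ mem_map_of_mem (mem_span_singleton_self w))]
  · simp [evalφ, evalψ, hφv, hψv, hi]

theorem veronese_notMem_span_pair {d : ℕ} (hd : 2 ≤ d) {u v w : σ → K}
    (hvu : v ∉ K ∙ u) (hvw : v ∉ K ∙ w) :
    veronese d v ∉ span K {veronese d u, veronese d w} := by
  obtain ⟨f, hf, hu, hw, hv⟩ := exists_isHomogeneous_eval_eq_zero_eval_ne_zero hd hvu hvw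
  obtain ⟨ℓ, hℓ⟩ := hf.exists_linearMap_veronese
  have : span K {veronese d u, veronese d w} ≤ LinearMap.ker ℓ := by
    simp [span_le, Set.insert_subset_iff, hℓ, hu, hw]
  exact fun h => hv (by simpa [hℓ] using this h)

theorem statement_19_general {Fq : Type} [Field Fq] (m d : ℕ) (hd1 : 1 < d) :
    ¬ ∃ W : Submodule Fq ({α : Fin (m+1) → ℕ // ∑ i, α i = d} → Fq),
        Module.finrank Fq W = 2 ∧
        ∀ Q : Projectivization Fq ({α : Fin (m+1) → ℕ // ∑ i, α i = d} → Fq),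
          Q.submodule ≤ W →
          ∃ (v : Fin (m+1) → Fq) (_ : v ≠ 0)
            (h : (fun α : {α : Fin (m+1) → ℕ // ∑ i, α i = d} =>
                ∏ i, v i ^ (α : Fin (m+1) → ℕ) i) ≠ 0),
            Q = Projectivization.mk Fq _ h := by
  rintro ⟨W, hW, hV⟩
  have span_eq_veronese (z) (hzW : z ∈ W) (hz : z ≠ 0) : ∃ p, Fq ∙ z = Fq ∙ veronese d p := by
    obtain ⟨p, -, _, hQ⟩ := hV (.mk Fq z hz) (by simpa [Projectivization.submodule_mk] using hzW)
    have := congrArg Projectivization.submodule hQ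
    rw [Projectivization.submodule_mk, Projectivization.submodule_mk] at this
    exact ⟨p, this⟩
  obtain ⟨x, hxW, y, hyW, hxy⟩ := W.exists_linearIndependent_pair_of_finrank_eq_two hW
  have hxy_add := LinearIndependent.pair_add_left_iff.2 hxy
  obtain ⟨u, hu⟩ := span_eq_veronese x hxW (hxy.ne_zero 0)
  obtain ⟨v, hv⟩ := span_eq_veronese y hyW (hxy.ne_zero 1)
  obtain ⟨w, hw⟩ := span_eq_veronese (x + y) (add_mem hxW hyW) (hxy_add.ne_zero 0)
  apply veronese_notMem_span_pair (by omega : 2 ≤ d) (u := u) (v := v) (w := w)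
  · refine fun h => hxy.notMem_span_singleton_of_pair ?_
    rw [← span_singleton_le_iff_mem, hu, hv]
    exact span_veronese_le_of_mem_span_singleton h
  · refine fun h => hxy_add.notMem_span_singleton_of_pair ?_
    rw [← span_singleton_le_iff_mem, hw, hv]
    exact span_veronese_le_of_mem_span_singleton h
  · have hy : y ∈ Fq ∙ x ⊔ Fq ∙ (x + y) :=
      mem_sup.2 ⟨-x, neg_mem (mem_span_singleton_self x), x + y, mem_span_singleton_self _, by abel⟩
    rw [span_insert, ← hu, ← hw, ← span_singleton_le_iff_mem, ← hv]
    exact (span_singleton_le_iff_mem _ _).2 hy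

/-- Corollary 4.9: for `q ≥ 4`, `m ≥ 2`, `1 < d < q - 1`, the image of
the degree-`d` Veronese embedding of `ℙ^m(F_q)` — with ambient projective space
coordinatized by the monomial exponent tuples `α` of degree `d` (there are
`k = binom(m+d,d)` of them, so the ambient space is `ℙ^(k-1)(F_q)`) — contains no
projective line: no `2`-dimensional linear subspace `W` has all of its projective
points lying in the Veronese variety. -/
theorem statement_19 {Fq : Type} [Field Fq] [Fintype Fq] (q m d : ℕ)
    (hq : q = Fintype.card Fq) (hq4 : 4 ≤ q) (hm : 2 ≤ m) (hd1 : 1 < d)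
    (hdq : d < q - 1) :
    ¬ ∃ W : Submodule Fq ({α : Fin (m+1) → ℕ // ∑ i, α i = d} → Fq),
        Module.finrank Fq W = 2 ∧
        ∀ Q : Projectivization Fq ({α : Fin (m+1) → ℕ // ∑ i, α i = d} → Fq),
          Q.submodule ≤ W →
          ∃ (v : Fin (m+1) → Fq) (_ : v ≠ 0)
            (h : (fun α : {α : Fin (m+1) → ℕ // ∑ i, α i = d} =>
                ∏ i, v i ^ (α : Fin (m+1) → ℕ) i) ≠ 0),
            Q = Projectivization.mk Fq _ h :=
  statement_19_general m d hd1
end
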